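/- arXiv:2508.19859 — 4 statements merged into one kernel-verified Lean document; each statement's English description precedes it below -/
import Mathlib

section
/- Consider the three-dimensional system given in cylindrical coordinates by ṙ = a_1 r z, φ̇ = 1, ż = b_2 z², with parameters a_1, b_2 ∈ ℝ. If a_1/b_2 > 1, then any spiral trajectory S of this system near the origin has Minkowski dimension equal to 1. -/
open MeasureTheory Filter Metric Set Topology

noncomputable section

/-- Upper `s`-dimensional Minkowski content of `U` (ambient dimension `N`, measure `μ`). -/
def upperMC {E : Type*} [PseudoEMetricSpace E] [MeasurableSpace E]
    (μ : Measure E) (N : ℝ) (U : Set E) (s : ℝ) : ENNReal :=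
  Filter.limsup (fun δ : ℝ => μ (Metric.cthickening δ U) / ENNReal.ofReal (δ ^ (N - s)))
    (nhdsWithin 0 (Set.Ioi 0))

/-- Lower `s`-dimensional Minkowski content. -/
def lowerMC {E : Type*} [PseudoEMetricSpace E] [MeasurableSpace E]
    (μ : Measure E) (N : ℝ) (U : Set E) (s : ℝ) : ENNReal :=
  Filter.liminf (fun δ : ℝ => μ (Metric.cthickening δ U) / ENNReal.ofReal (δ ^ (N - s)))
    (nhdsWithin 0 (Set.Ioi 0))

/-- Upper Minkowski (box) dimension. -/
def upperBoxDim {E : Type*} [PseudoEMetricSpace E] [MeasurableSpace E]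
    (μ : Measure E) (N : ℝ) (U : Set E) : ℝ :=
  sInf {s : ℝ | 0 ≤ s ∧ upperMC μ N U s = 0}

/-- Lower Minkowski (box) dimension. -/
def lowerBoxDim {E : Type*} [PseudoEMetricSpace E] [MeasurableSpace E]
    (μ : Measure E) (N : ℝ) (U : Set E) : ℝ :=
  sInf {s : ℝ | 0 ≤ s ∧ lowerMC μ N U s = 0}

/-- The Minkowski (box) dimension of `U` exists and equals `d`. -/
def HasMinkDim {E : Type*} [PseudoEMetricSpace E] [MeasurableSpace E]
    (μ : Measure E) (N : ℝ) (U : Set E) (d : ℝ) : Prop :=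
  lowerBoxDim μ N U = d ∧ upperBoxDim μ N U = d

/-- `U` is Minkowski measurable. -/
def MinkMeasurable {E : Type*} [PseudoEMetricSpace E] [MeasurableSpace E]
    (μ : Measure E) (N : ℝ) (U : Set E) : Prop :=
  ∃ d : ℝ, lowerMC μ N U d = upperMC μ N U d ∧ 0 < lowerMC μ N U d ∧ lowerMC μ N U d < ⊤

/-- `U` is Minkowski nondegenerate. -/
def MinkNondeg {E : Type*} [PseudoEMetricSpace E] [MeasurableSpace E]
    (μ : Measure E) (N : ℝ) (U : Set E) : Prop :=
  ∃ d : ℝ, 0 < lowerMC μ N U d ∧ upperMC μ N U d < ⊤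

abbrev E2 := EuclideanSpace ℝ (Fin 2)
abbrev E3 := EuclideanSpace ℝ (Fin 3)

def pt2 (x y : ℝ) : E2 := (WithLp.equiv 2 (Fin 2 → ℝ)).symm ![x, y]
def pt3 (x y z : ℝ) : E3 := (WithLp.equiv 2 (Fin 3 → ℝ)).symm ![x, y, z]

end

section spiralAux

open Real

lemma dist_pt3_le (a b c a' b' c' : ℝ) :
    dist (pt3 a b c) (pt3 a' b' c') ≤ |a - a'| + |b - b'| + |c - c'| := by
  rw [EuclideanSpace.dist_eq]
  have hsum : (∑ i, dist (pt3 a b c i) (pt3 a' b' c' i) ^ 2)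
      = (a-a')^2 + (b-b')^2 + (c-c')^2 := by
    simp [Fin.sum_univ_three, pt3, Real.dist_eq, sq_abs]
  rw [hsum]
  refine (Real.sqrt_le_sqrt ?_).trans_eq (Real.sqrt_sq (by positivity))
  nlinarith [abs_nonneg (a-a'), abs_nonneg (b-b'), abs_nonneg (c-c'),
    sq_abs (a-a'), sq_abs (b-b'), sq_abs (c-c'),
    mul_nonneg (abs_nonneg (a-a')) (abs_nonneg (b-b')),
    mul_nonneg (abs_nonneg (a-a')) (abs_nonneg (c-c')),
    mul_nonneg (abs_nonneg (b-b')) (abs_nonneg (c-c'))]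

lemma abs_le_dist_pt3 (a b c a' b' c' : ℝ) :
    |c - c'| ≤ dist (pt3 a b c) (pt3 a' b' c') := by
  rw [EuclideanSpace.dist_eq]
  have hsum : (∑ i, dist (pt3 a b c i) (pt3 a' b' c' i) ^ 2)
      = (a-a')^2 + (b-b')^2 + (c-c')^2 := by
    simp [Fin.sum_univ_three, pt3, Real.dist_eq, sq_abs]
  rw [hsum, show |c - c'| = Real.sqrt ((c-c')^2) from (Real.sqrt_sq_eq_abs _).symm]
  exact Real.sqrt_le_sqrt (by nlinarith [sq_nonneg (a-a'), sq_nonneg (b-b')])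

end spiralAux

lemma rpow_ratio {K δ s : ℝ} (hδ : 0 < δ) :
    ENNReal.ofReal (K * δ ^ 2) / ENNReal.ofReal (δ ^ ((3:ℝ) - s))
      = ENNReal.ofReal (K * δ ^ (s - 1)) := by
  rw [← ENNReal.ofReal_div_of_pos (Real.rpow_pos_of_pos hδ _)]
  congr 1
  rw [mul_div_assoc]
  congr 1
  rw [show (δ:ℝ) ^ 2 = δ ^ ((2:ℕ):ℝ) from (Real.rpow_natCast δ 2).symm,
    ← Real.rpow_sub hδ]
  ring_nf

lemma dim_of_bounds (S : Set E3) (c C δ₀ : ℝ) (hc : 0 < c) (hC : 0 < C) (hδ₀ : 0 < δ₀)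
    (hlow : ∀ δ : ℝ, 0 < δ → δ ≤ δ₀ → ENNReal.ofReal (c * δ ^ 2) ≤ volume (cthickening δ S))
    (hup : ∀ δ : ℝ, 0 < δ → δ ≤ δ₀ → volume (cthickening δ S) ≤ ENNReal.ofReal (C * δ ^ 2)) :
    HasMinkDim volume 3 S 1 := by
  set f : ℝ → ℝ → ENNReal := fun s δ =>
    volume (cthickening δ S) / ENNReal.ofReal (δ ^ ((3:ℝ) - s)) with hf
  have hev : ∀ᶠ δ in 𝓝[>] (0:ℝ), 0 < δ ∧ δ ≤ δ₀ := by
    filter_upwards [Ioc_mem_nhdsGT_of_mem (by constructor <;> simp [hδ₀] : (0:ℝ) ∈ Ico (0:ℝ) δ₀)]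
      with δ hδ using ⟨hδ.1, hδ.2⟩
  -- upper bound: for s > 1 the upper content vanishes
  have hub : ∀ s : ℝ, 1 < s → upperMC volume 3 S s = 0 := by
    intro s hs
    have h1 : ∀ᶠ δ in 𝓝[>] (0:ℝ), f s δ ≤ ENNReal.ofReal (C * δ ^ (s - 1)) := by
      filter_upwards [hev] with δ hδ
      calc f s δ ≤ ENNReal.ofReal (C * δ ^ 2) / ENNReal.ofReal (δ ^ ((3:ℝ) - s)) :=
            ENNReal.div_le_div_right (hup δ hδ.1 hδ.2) _
        _ = _ := rpow_ratio hδ.1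
    have h2 : Tendsto (fun δ : ℝ => ENNReal.ofReal (C * δ ^ (s - 1))) (𝓝[>] (0:ℝ)) (𝓝 0) := by
      have h3 : Tendsto (fun δ : ℝ => δ ^ (s - 1)) (𝓝[>] (0:ℝ)) (𝓝 0) := by
        have := (Real.continuousAt_rpow_const 0 (s-1) (Or.inr (by linarith))).tendsto
        rw [Real.zero_rpow (by linarith : s - 1 ≠ 0)] at this
        exact this.mono_left nhdsWithin_le_nhds
      have := (ENNReal.continuous_ofReal.tendsto 0).comp ((h3.const_mul C).trans_eq ?_)
      · simpa [Function.comp_def] using this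
      · simp
    have : upperMC volume 3 S s ≤ 0 := by
      calc upperMC volume 3 S s ≤ limsup (fun δ : ℝ => ENNReal.ofReal (C * δ ^ (s - 1))) (𝓝[>] (0:ℝ)) :=
            limsup_le_limsup h1
        _ = 0 := h2.limsup_eq
    simpa using this
  -- lower: for s < 1 the lower content is ⊤
  have hlb : ∀ s : ℝ, s < 1 → lowerMC volume 3 S s = ⊤ := by
    intro s hs
    have h1 : ∀ᶠ δ in 𝓝[>] (0:ℝ), ENNReal.ofReal (c * δ ^ (s - 1)) ≤ f s δ := by
      filter_upwards [hev] with δ hδ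
      calc ENNReal.ofReal (c * δ ^ (s - 1))
          = ENNReal.ofReal (c * δ ^ 2) / ENNReal.ofReal (δ ^ ((3:ℝ) - s)) := (rpow_ratio hδ.1).symm
        _ ≤ f s δ := ENNReal.div_le_div_right (hlow δ hδ.1 hδ.2) _
    have h2 : Tendsto (fun δ : ℝ => ENNReal.ofReal (c * δ ^ (s - 1))) (𝓝[>] (0:ℝ)) (𝓝 ⊤) := by
      have h3 : Tendsto (fun δ : ℝ => δ ^ (s - 1)) (𝓝[>] (0:ℝ)) atTop := by
        have hpos : Tendsto (fun δ : ℝ => δ ^ (1 - s)) (𝓝[>] (0:ℝ)) (𝓝[>] (0:ℝ)) := by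
          rw [tendsto_nhdsWithin_iff]
          constructor
          · have := (Real.continuousAt_rpow_const 0 (1-s) (Or.inr (by linarith))).tendsto
            rw [Real.zero_rpow (by linarith : (1:ℝ) - s ≠ 0)] at this
            exact this.mono_left nhdsWithin_le_nhds
          · filter_upwards [self_mem_nhdsWithin] with δ hδ
            exact Real.rpow_pos_of_pos hδ _
        have := tendsto_inv_nhdsGT_zero.comp hpos
        refine this.congr' ?_
        filter_upwards [self_mem_nhdsWithin] with δ (hδ : (0:ℝ) < δ)
        simp only [Function.comp]
        rw [← Real.rpow_neg hδ.le]
        ring_nf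
      exact ENNReal.tendsto_ofReal_atTop.comp (h3.const_mul_atTop hc)
    refine le_antisymm le_top ?_
    calc (⊤ : ENNReal) = liminf (fun δ : ℝ => ENNReal.ofReal (c * δ ^ (s - 1))) (𝓝[>] (0:ℝ)) :=
          h2.liminf_eq.symm
      _ ≤ lowerMC volume 3 S s := liminf_le_liminf h1
  have hmono : ∀ s : ℝ, lowerMC volume 3 S s ≤ upperMC volume 3 S s := fun s =>
    liminf_le_limsup
  have key : ∀ MC : ℝ → ENNReal, (∀ s, 1 < s → MC s = 0) → (∀ s, s < 1 → MC s ≠ 0) →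
      sInf {s : ℝ | 0 ≤ s ∧ MC s = 0} = 1 := by
    intro MC h0 hne
    have hbdd : BddBelow {s : ℝ | 0 ≤ s ∧ MC s = 0} := ⟨0, fun x hx => hx.1⟩
    refine le_antisymm ?_ ?_
    · refine le_of_forall_pos_le_add fun ε hε => ?_
      exact csInf_le hbdd ⟨by linarith, h0 _ (by linarith)⟩
    · refine le_csInf ⟨2, by norm_num, h0 2 (by norm_num)⟩ fun s hs => ?_
      by_contra hlt
      push_neg at hlt
      exact hne s (by linarith) hs.2
  constructor
  · refine key _ (fun s hs => le_antisymm ((hmono s).trans_eq (hub s hs)) zero_le) ?_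
    intro s hs
    rw [hlb s hs]; simp
  · refine key _ hub ?_
    intro s hs h0
    have := hmono s
    rw [hlb s hs, h0, top_le_iff] at this
    simp at this

set_option maxHeartbeats 4000000 in
lemma spiral_dim (a₁ b₂ c : ℝ) (h : 1 < a₁ / b₂) (hc : |c| ≤ 1) (t₁ : ℝ)
    (r φ z : ℝ → ℝ)
    (hr : ∀ t ∈ Set.Ici t₁, 0 < r t) (hz : ∀ t ∈ Set.Ici t₁, 0 < z t)
    (hoder : ∀ t ∈ Set.Ici t₁, HasDerivAt r (a₁ * r t * z t) t)
    (hodeφ : ∀ t ∈ Set.Ici t₁, HasDerivAt φ c t)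
    (hodez : ∀ t ∈ Set.Ici t₁, HasDerivAt z (b₂ * (z t) ^ 2) t)
    (S : Set E3)
    (hS : S = (fun t => pt3 (r t * Real.cos (φ t)) (r t * Real.sin (φ t)) (z t)) '' Set.Ici t₁) :
    HasMinkDim volume 3 S 1 := by
  have ht₁ : t₁ ∈ Ici t₁ := le_refl t₁
  have hz₁ : 0 < z t₁ := hz t₁ ht₁
  set z₁ := z t₁ with hz₁def
  set w₁ := z₁⁻¹ with hw₁def
  have hw₁ : 0 < w₁ := inv_pos.mpr hz₁
  have hb₂ : b₂ ≠ 0 := by rintro rfl; rw [div_zero] at h; linarith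
  -- the reciprocal of z is affine
  have hweq : ∀ t ∈ Ici t₁, (z t)⁻¹ = w₁ - b₂ * (t - t₁) := by
    intro T hT
    have hmem : ∀ x ∈ Icc t₁ T, x ∈ Ici t₁ := fun x hx => hx.1
    have hder : ∀ x ∈ Ici t₁, HasDerivAt (fun t => (z t)⁻¹ + b₂ * t) 0 x := by
      intro x hx
      have h1 := ((hodez x hx).inv (ne_of_gt (hz x hx))).add ((hasDerivAt_id x).const_mul b₂)
      refine h1.congr_deriv (Eq.symm ?_)
      have := ne_of_gt (hz x hx)
      field_simp
      ring
    have key := constant_of_has_deriv_right_zero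
      (f := fun t => (z t)⁻¹ + b₂ * t) (a := t₁) (b := T)
      (fun x hx => (hder x (hmem x hx)).continuousAt.continuousWithinAt)
      (fun x hx => (hder x (hmem x (Ico_subset_Icc_self hx))).hasDerivWithinAt)
      T (right_mem_Icc.mpr hT)
    have : (z T)⁻¹ + b₂ * T = (z t₁)⁻¹ + b₂ * t₁ := key
    rw [← hz₁def, ← hw₁def] at this
    linarith
  -- b₂ must be negative
  have hb₂neg : b₂ < 0 := by
    rcases hb₂.lt_or_gt with hlt | hgt
    · exact hlt
    · exfalso
      have hT : t₁ ≤ t₁ + (w₁ + 1) / b₂ := by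
        have : 0 < (w₁ + 1) / b₂ := div_pos (by linarith) hgt
        linarith
      have h1 := hweq _ hT
      have h2 : (0:ℝ) < (z (t₁ + (w₁ + 1) / b₂))⁻¹ := inv_pos.mpr (hz _ hT)
      rw [h1] at h2
      have h3 : b₂ * (t₁ + (w₁ + 1) / b₂ - t₁) = w₁ + 1 := by field_simp; ring
      linarith
  set β := -b₂ with hβdef
  have hβ : 0 < β := by simp [hβdef]; linarith
  set u : ℝ → ℝ := fun t => w₁ + β * (t - t₁) with hudef
  have huderiv : ∀ x : ℝ, HasDerivAt u β x := by
    intro x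
    have : HasDerivAt (fun t => w₁ + β * (t - t₁)) (β * 1) x :=
      ((((hasDerivAt_id x).sub_const t₁)).const_mul β).const_add w₁
    simpa only [mul_one] using this
  have hupos : ∀ t ∈ Ici t₁, 0 < u t := by
    intro t ht
    have : 0 ≤ β * (t - t₁) := mul_nonneg hβ.le (by simp at ht; linarith)
    simp only [hudef]; linarith
  have hune : ∀ t ∈ Ici t₁, u t ≠ 0 := fun t ht => ne_of_gt (hupos t ht)
  have hzeq : ∀ t ∈ Ici t₁, z t = (u t)⁻¹ := by
    intro t ht
    rw [show z t = ((z t)⁻¹)⁻¹ from (inv_inv _).symm, hweq t ht]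
    congr 1
    simp only [hudef, hβdef]; ring
  set α := a₁ / b₂ with hαdef
  have hα1 : 1 < α := h
  have ha₁ : a₁ = -(α * β) := by
    simp only [hαdef, hβdef]; field_simp
  have hαβ : 0 < α * β := mul_pos (by linarith) hβ
  set K := r t₁ * w₁ ^ α with hKdef
  have hK : 0 < K := mul_pos (hr t₁ ht₁) (Real.rpow_pos_of_pos hw₁ α)
  have hut₁ : u t₁ = w₁ := by simp [hudef]
  -- explicit formula for r
  have hreq : ∀ t ∈ Ici t₁, r t = K * u t ^ (-α) := by
    intro T hT
    have hmem : ∀ x ∈ Icc t₁ T, x ∈ Ici t₁ := fun x hx => hx.1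
    have hder : ∀ x ∈ Ici t₁,
        HasDerivAt (fun t => Real.log (r t) + α * Real.log (u t)) 0 x := by
      intro x hx
      have h1 := (hoder x hx).log (ne_of_gt (hr x hx))
      have h2 := ((huderiv x).log (hune x hx)).const_mul α
      have h3 := h1.add h2
      refine h3.congr_deriv (Eq.symm ?_)
      rw [hzeq x hx, ha₁]
      have hrne := ne_of_gt (hr x hx)
      have hune' := hune x hx
      field_simp
      ring
    have key := constant_of_has_deriv_right_zero
      (f := fun t => Real.log (r t) + α * Real.log (u t)) (a := t₁) (b := T)
      (fun x hx => (hder x (hmem x hx)).continuousAt.continuousWithinAt)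
      (fun x hx => (hder x (hmem x (Ico_subset_Icc_self hx))).hasDerivWithinAt)
      T (right_mem_Icc.mpr hT)
    have key' : Real.log (r T) + α * Real.log (u T)
        = Real.log (r t₁) + α * Real.log w₁ := by
      have := key; simp only [hut₁] at this; exact this
    have hrT := hr T hT
    have huT := hupos T hT
    have hlog : Real.log (r T)
        = Real.log (r t₁) + Real.log w₁ * α + Real.log (u T) * (-α) := by linarith
    calc r T = Real.exp (Real.log (r T)) := (Real.exp_log hrT).symm
      _ = Real.exp (Real.log (r t₁)) * Real.exp (Real.log w₁ * α)
            * Real.exp (Real.log (u T) * (-α)) := by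
          rw [hlog, ← Real.exp_add, ← Real.exp_add]
      _ = K * u T ^ (-α) := by
          rw [Real.exp_log (hr t₁ ht₁), ← Real.rpow_def_of_pos hw₁,
            ← Real.rpow_def_of_pos huT, hKdef]
  -- the upper bound function G and its pieces
  set Gx : ℝ → ℝ := fun s => K * u s ^ (-α) + K / (β * (α - 1)) * u s ^ (1 - α) with hGxdef
  set G : ℝ → ℝ := fun s => 2 * Gx s + (u s)⁻¹ with hGdef
  have hGxpos : ∀ t ∈ Ici t₁, 0 < Gx t := by
    intro t ht
    have h1 := hupos t ht
    have h2 : 0 < K / (β * (α - 1)) := div_pos hK (mul_pos hβ (by linarith))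
    have := Real.rpow_pos_of_pos h1 (-α)
    have := Real.rpow_pos_of_pos h1 (1 - α)
    positivity
  have hGpos : ∀ t ∈ Ici t₁, 0 < G t := by
    intro t ht
    have h1 := hGxpos t ht
    have h2 := inv_pos.mpr (hupos t ht)
    have e : G t = 2 * Gx t + (u t)⁻¹ := rfl
    rw [e]; linarith
  have hGxderiv : ∀ x ∈ Ici t₁,
      HasDerivAt Gx (-(α * β * K * u x ^ (-α - 1) + K * u x ^ (-α))) x := by
    intro x hx
    have h1 : HasDerivAt (fun s => u s ^ (-α)) (β * -α * u x ^ (-α - 1)) x :=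
      (huderiv x).rpow_const (Or.inl (hune x hx))
    have h2 : HasDerivAt (fun s => u s ^ (1 - α)) (β * (1 - α) * u x ^ (1 - α - 1)) x :=
      (huderiv x).rpow_const (Or.inl (hune x hx))
    have h3 := (h1.const_mul K).add (h2.const_mul (K / (β * (α - 1))))
    refine h3.congr_deriv (Eq.symm ?_)
    have e1 : (1:ℝ) - α - 1 = -α := by ring
    rw [e1]
    have hne1 : β * (α - 1) ≠ 0 := ne_of_gt (mul_pos hβ (by linarith))
    have hne2 : α - 1 ≠ 0 := ne_of_gt (by linarith)
    field_simp
    ring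
  -- the coordinate-wise decay bound
  have coordb : ∀ q q' : ℝ → ℝ, (∀ x ∈ Ici t₁, HasDerivAt q (q' x) x) →
      (∀ x, |q x| ≤ 1) → (∀ x, |q' x| ≤ 1) →
      ∀ t ∈ Ici t₁, ∀ s, t ≤ s → |r s * q s - r t * q t| ≤ Gx t - Gx s := by
    intro q q' hq hqb hq'b t ht s hts
    have hmem : ∀ x ∈ Icc t s, x ∈ Ici t₁ := fun x hx => le_trans ht hx.1
    have hf' : ∀ x ∈ Ici t₁, HasDerivAt (fun τ => r τ * q τ - r t * q t)
        (a₁ * r x * z x * q x + r x * q' x) x := fun x hx =>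
      ((hoder x hx).mul (hq x hx)).sub_const _
    have hB' : ∀ x ∈ Ici t₁, HasDerivAt (fun τ => Gx t - Gx τ)
        (α * β * K * u x ^ (-α - 1) + K * u x ^ (-α)) x := by
      intro x hx
      have := (hGxderiv x hx).const_sub (Gx t)
      simpa using this
    have key := image_norm_le_of_norm_deriv_right_le_deriv_boundary'
      (f := fun τ => r τ * q τ - r t * q t) (a := t) (b := s)
      (f' := fun x => a₁ * r x * z x * q x + r x * q' x)
      (fun x hx => ((hf' x (hmem x hx)).continuousAt).continuousWithinAt)
      (fun x hx => (hf' x (hmem x (Ico_subset_Icc_self hx))).hasDerivWithinAt)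
      (B := fun τ => Gx t - Gx τ)
      (B' := fun x => α * β * K * u x ^ (-α - 1) + K * u x ^ (-α))
      (by simp)
      (fun x hx => ((hB' x (hmem x hx)).continuousAt).continuousWithinAt)
      (fun x hx => (hB' x (hmem x (Ico_subset_Icc_self hx))).hasDerivWithinAt)
      ?_ (right_mem_Icc.mpr hts)
    · simpa [Real.norm_eq_abs] using key
    · intro x hx
      have hx₁ : x ∈ Ici t₁ := hmem x (Ico_subset_Icc_self hx)
      show ‖a₁ * r x * z x * q x + r x * q' x‖
        ≤ α * β * K * u x ^ (-α - 1) + K * u x ^ (-α)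
      rw [Real.norm_eq_abs]
      have hrx := hr x hx₁
      have hzx := hz x hx₁
      have hux := hupos x hx₁
      have habs1 : |a₁ * r x * z x * q x + r x * q' x|
          ≤ α * β * (r x * z x) + r x := by
        have e1 : |a₁ * r x * z x * q x| ≤ α * β * (r x * z x) := by
          rw [abs_mul]
          have : |a₁ * r x * z x| = α * β * (r x * z x) := by
            rw [abs_mul, abs_mul, ha₁, abs_neg, abs_of_pos hαβ,
              abs_of_pos hrx, abs_of_pos hzx]
            ring
          rw [this]
          have h1 : 0 ≤ α * β * (r x * z x) := by positivity
          nlinarith [hqb x, abs_nonneg (q x)]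
        have e2 : |r x * q' x| ≤ r x := by
          rw [abs_mul, abs_of_pos hrx]
          nlinarith [hq'b x, abs_nonneg (q' x)]
        calc |a₁ * r x * z x * q x + r x * q' x|
            ≤ |a₁ * r x * z x * q x| + |r x * q' x| := abs_add_le _ _
          _ ≤ α * β * (r x * z x) + r x := add_le_add e1 e2
      refine habs1.trans (le_of_eq ?_)
      have hrw : K * u x ^ (-α) * (u x)⁻¹ = K * u x ^ (-α - 1) := by
        rw [← Real.rpow_neg_one (u x), mul_assoc, ← Real.rpow_add hux,
          show -α + -1 = -α - 1 from by ring]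
      calc α * β * (r x * z x) + r x
          = α * β * (K * u x ^ (-α) * (u x)⁻¹) + K * u x ^ (-α) := by
            rw [hreq x hx₁, hzeq x hx₁]
        _ = α * β * (K * u x ^ (-α - 1)) + K * u x ^ (-α) := by rw [hrw]
        _ = α * β * K * u x ^ (-α - 1) + K * u x ^ (-α) := by ring
  -- z is antitone, u monotone
  have hzanti : ∀ t ∈ Ici t₁, ∀ s, t ≤ s → z s ≤ z t := by
    intro t ht s hts
    have hs : s ∈ Ici t₁ := le_trans ht hts
    rw [hzeq t ht, hzeq s hs]
    have h1 : u t ≤ u s := by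
      simp only [hudef]
      nlinarith [hβ]
    exact inv_anti₀ (hupos t ht) h1
  -- the key distance estimate
  set F : ℝ → E3 := fun t => pt3 (r t * Real.cos (φ t)) (r t * Real.sin (φ t)) (z t)
    with hFdef
  have hdist : ∀ t ∈ Ici t₁, ∀ s, t ≤ s → dist (F s) (F t) ≤ G t - G s := by
    intro t ht s hts
    have hs : s ∈ Ici t₁ := le_trans ht hts
    have h1 := coordb (fun x => Real.cos (φ x)) (fun x => -Real.sin (φ x) * c)
      (fun x hx => (hodeφ x hx).cos) (fun x => Real.abs_cos_le_one _)
      (fun x => by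
        rw [abs_mul, abs_neg]
        nlinarith [Real.abs_sin_le_one (φ x), abs_nonneg (Real.sin (φ x)), abs_nonneg c])
      t ht s hts
    have h2 := coordb (fun x => Real.sin (φ x)) (fun x => Real.cos (φ x) * c)
      (fun x hx => (hodeφ x hx).sin) (fun x => Real.abs_sin_le_one _)
      (fun x => by
        rw [abs_mul]
        nlinarith [Real.abs_cos_le_one (φ x), abs_nonneg (Real.cos (φ x)), abs_nonneg c])
      t ht s hts
    have h3 : |z s - z t| = (u t)⁻¹ - (u s)⁻¹ := by
      rw [abs_sub_comm, abs_of_nonneg (by linarith [hzanti t ht s hts]),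
        hzeq t ht, hzeq s hs]
    calc dist (F s) (F t)
        ≤ |r s * Real.cos (φ s) - r t * Real.cos (φ t)|
          + |r s * Real.sin (φ s) - r t * Real.sin (φ t)| + |z s - z t| :=
          dist_pt3_le _ _ _ _ _ _
      _ ≤ (Gx t - Gx s) + (Gx t - Gx s) + ((u t)⁻¹ - (u s)⁻¹) := by
          rw [h3]; exact add_le_add (add_le_add h1 h2) (le_refl _)
      _ = G t - G s := by
          have e : ∀ y, G y = 2 * Gx y + (u y)⁻¹ := fun _ => rfl
          rw [e, e]; ring
  -- constants
  set K₀ := volume (ball (0:E3) 1) with hK₀def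
  have hK₀pos : 0 < K₀ := measure_ball_pos _ _ one_pos
  have hK₀fin : K₀ < ⊤ := measure_ball_lt_top
  set k₀ := K₀.toReal with hk₀def
  have hk₀ : 0 < k₀ := ENNReal.toReal_pos hK₀pos.ne' hK₀fin.ne
  have hK₀eq : K₀ = ENNReal.ofReal k₀ := (ENNReal.ofReal_toReal hK₀fin.ne).symm
  have hfr : Module.finrank ℝ E3 = 3 := by simp
  set δ₀ := z₁ / 4 with hδ₀def
  have hδ₀ : 0 < δ₀ := by rw [hδ₀def]; positivity
  set G₁ := G t₁ with hG₁def
  have hG₁ : 0 < G₁ := hGpos t₁ ht₁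
  have hFe : ∀ t, F t = pt3 (r t * Real.cos (φ t)) (r t * Real.sin (φ t)) (z t) :=
    fun _ => rfl
  have hGanti : ∀ t ∈ Ici t₁, ∀ s, t ≤ s → G s ≤ G t := by
    intro t ht s hts
    have h1 := hdist t ht s hts
    have h2 := @dist_nonneg _ _ (F s) (F t)
    linarith
  have hcpos : 0 < z₁ * k₀ / 4 := div_pos (mul_pos hz₁ hk₀) (by norm_num)
  have hCpos : 0 < 27 * (G₁ + δ₀) * k₀ :=
    mul_pos (mul_pos (by norm_num) (by linarith)) hk₀
  apply dim_of_bounds S (z₁ * k₀ / 4) (27 * (G₁ + δ₀) * k₀) δ₀ hcpos hCpos hδ₀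
  -- lower volume bound
  · intro δ hδ hδδ₀
    set n := ⌊z₁ / (2 * δ)⌋₊ with hndef
    have hx2 : (2:ℝ) ≤ z₁ / (2 * δ) := by
      rw [le_div_iff₀ (by positivity)]
      rw [hδ₀def] at hδδ₀; linarith
    have hnge : z₁ / (4 * δ) ≤ (n:ℝ) := by
      have h1 := Nat.sub_one_lt_floor (z₁ / (2*δ))
      have h2 : z₁ / (4*δ) = (z₁/(2*δ))/2 := by
        rw [div_div]; ring_nf
      rw [hndef]; rw [h2]; linarith
    set τ : ℝ → ℝ := fun v => t₁ + (v⁻¹ - w₁) / β with hτdef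
    have hτmem : ∀ v : ℝ, 0 < v → v ≤ z₁ → τ v ∈ Ici t₁ := by
      intro v hv hvz
      have h1 : w₁ ≤ v⁻¹ := by rw [hw₁def]; exact inv_anti₀ hv hvz
      have h2 : 0 ≤ (v⁻¹ - w₁)/β := div_nonneg (by linarith) hβ.le
      simp only [hτdef, mem_Ici]; linarith
    have huτ : ∀ v : ℝ, 0 < v → v ≤ z₁ → u (τ v) = v⁻¹ := by
      intro v hv hvz
      simp only [hudef, hτdef]
      field_simp
      ring
    have hzτ : ∀ v : ℝ, 0 < v → v ≤ z₁ → z (τ v) = v := by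
      intro v hv hvz
      rw [hzeq _ (hτmem v hv hvz), huτ v hv hvz, inv_inv]
    set q : ℕ → E3 := fun i => F (τ (2 * δ * (i + 1))) with hqdef
    have hvlt : ∀ i : ℕ, i < n → 0 < 2 * δ * ((i:ℝ)+1) ∧ 2 * δ * ((i:ℝ)+1) ≤ z₁ := by
      intro i hi
      constructor
      · positivity
      · have h1 : (i:ℝ) + 1 ≤ (n:ℝ) := by exact_mod_cast hi
        have h2 : (n:ℝ) ≤ z₁ / (2*δ) := Nat.floor_le (by positivity)
        rw [le_div_iff₀ (by positivity)] at h2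
        nlinarith
    have hqS : ∀ i : ℕ, i < n → q i ∈ S := by
      intro i hi
      rw [hS]
      exact ⟨τ (2*δ*((i:ℝ)+1)), hτmem _ (hvlt i hi).1 (hvlt i hi).2, rfl⟩
    have hdisj : (↑(Finset.range n) : Set ℕ).PairwiseDisjoint (fun i => ball (q i) δ) := by
      intro i hi j hj hij
      simp only [Finset.coe_range, mem_Iio] at hi hj
      apply ball_disjoint_ball
      have hzi := hzτ _ (hvlt i hi).1 (hvlt i hi).2
      have hzj := hzτ _ (hvlt j hj).1 (hvlt j hj).2
      have hge : |z (τ (2*δ*((i:ℝ)+1))) - z (τ (2*δ*((j:ℝ)+1)))| ≤ dist (q i) (q j) := by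
        rw [hqdef]
        simp only [hFe]
        exact abs_le_dist_pt3 _ _ _ _ _ _
      rw [hzi, hzj] at hge
      have hone : (1:ℝ) ≤ |(i:ℝ) - (j:ℝ)| := by
        rcases lt_or_gt_of_ne hij with hl | hl
        · rw [abs_sub_comm, abs_of_nonneg (by
            have : (i:ℝ) ≤ (j:ℝ) := by exact_mod_cast hl.le
            linarith)]
          have : (i:ℝ) + 1 ≤ (j:ℝ) := by exact_mod_cast hl
          linarith
        · rw [abs_of_nonneg (by
            have : (j:ℝ) ≤ (i:ℝ) := by exact_mod_cast hl.le
            linarith)]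
          have : (j:ℝ) + 1 ≤ (i:ℝ) := by exact_mod_cast hl
          linarith
      have habs : |2*δ*((i:ℝ)+1) - 2*δ*((j:ℝ)+1)| = 2*δ*|(i:ℝ) - (j:ℝ)| := by
        rw [show 2*δ*((i:ℝ)+1) - 2*δ*((j:ℝ)+1) = 2*δ*((i:ℝ) - (j:ℝ)) from by ring,
          abs_mul, abs_of_pos (by positivity : (0:ℝ) < 2*δ)]
      have h2δ : 2*δ ≤ |2*δ*((i:ℝ)+1) - 2*δ*((j:ℝ)+1)| := by
        rw [habs]; nlinarith
      linarith
    have hsub : (⋃ i ∈ Finset.range n, ball (q i) δ) ⊆ cthickening δ S := by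
      refine iUnion₂_subset fun i hi => ?_
      simp only [Finset.mem_range] at hi
      exact ball_subset_closedBall.trans (closedBall_subset_cthickening (hqS i hi) δ)
    have hvol : volume (⋃ i ∈ Finset.range n, ball (q i) δ)
        = (n:ENNReal) * (ENNReal.ofReal (δ^3) * K₀) := by
      rw [measure_biUnion_finset hdisj (fun b _ => measurableSet_ball)]
      have he : ∀ i : ℕ, volume (ball (q i) δ) = ENNReal.ofReal (δ^3) * K₀ := by
        intro i
        rw [Measure.addHaar_ball volume (q i) hδ.le, hfr, hK₀def]
      simp only [he, Finset.sum_const, Finset.card_range, nsmul_eq_mul]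
    calc ENNReal.ofReal (z₁ * k₀ / 4 * δ^2)
        ≤ (n:ENNReal) * (ENNReal.ofReal (δ^3) * K₀) := by
          rw [hK₀eq, ← ENNReal.ofReal_mul (by positivity),
            ← ENNReal.ofReal_natCast n, ← ENNReal.ofReal_mul (Nat.cast_nonneg n)]
          apply ENNReal.ofReal_le_ofReal
          have h1 := mul_le_mul_of_nonneg_right hnge (by positivity : (0:ℝ) ≤ δ^3 * k₀)
          have h2 : z₁/(4*δ) * (δ^3*k₀) = z₁ * k₀ / 4 * δ^2 := by
            field_simp
          linarith
      _ = volume (⋃ i ∈ Finset.range n, ball (q i) δ) := hvol.symm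
      _ ≤ volume (cthickening δ S) := measure_mono hsub
  -- upper volume bound
  · intro δ hδ hδδ₀
    classical
    set N := ⌊G₁ / δ⌋₊ + 1 with hNdef
    set T : ℕ → ℝ := fun i =>
      if hex : ∃ s, t₁ ≤ s ∧ G s ∈ Ico ((i:ℝ)*δ) (((i:ℝ)+1)*δ) then hex.choose else t₁
      with hTdef
    have hGub : ∀ s ∈ Ici t₁, G s ≤ G₁ := fun s hs => hGanti t₁ ht₁ s hs
    have hFdist : ∀ t ∈ Ici t₁, ∀ s ∈ Ici t₁, dist (F s) (F t) ≤ |G (t:ℝ) - G s| := by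
      intro t ht s hs
      rcases le_total t s with hts | hst
      · exact (hdist t ht s hts).trans (le_abs_self _)
      · rw [dist_comm, abs_sub_comm]
        exact (hdist s hs t hst).trans (le_abs_self _)
    have hcov : ∀ p ∈ S, ∃ i, i < N ∧ dist p (F (T i)) ≤ δ := by
      intro p hp
      rw [hS] at hp
      obtain ⟨s, hs, rfl⟩ := hp
      set i := ⌊G s / δ⌋₊ with hidef
      have hGs : 0 < G s := hGpos s hs
      have hfle : (i:ℝ) * δ ≤ G s := by
        have h1 : (i:ℝ) ≤ G s / δ := Nat.floor_le (le_of_lt (div_pos hGs hδ))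
        have h2 := mul_le_mul_of_nonneg_right h1 hδ.le
        rw [div_mul_cancel₀ _ (ne_of_gt hδ)] at h2
        exact h2
      have hflt : G s < ((i:ℝ)+1) * δ := by
        have h1 : G s / δ < (i:ℝ) + 1 := Nat.lt_floor_add_one (G s / δ)
        have h2 := mul_lt_mul_of_pos_right h1 hδ
        rw [div_mul_cancel₀ _ (ne_of_gt hδ)] at h2
        exact h2
      have hex : ∃ s', t₁ ≤ s' ∧ G s' ∈ Ico ((i:ℝ)*δ) (((i:ℝ)+1)*δ) := ⟨s, hs, hfle, hflt⟩
      refine ⟨i, ?_, ?_⟩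
      · have h1 : i ≤ ⌊G₁/δ⌋₊ := Nat.floor_le_floor (by gcongr; exact hGub s hs)
        omega
      · have hTi : t₁ ≤ T i ∧ G (T i) ∈ Ico ((i:ℝ)*δ) (((i:ℝ)+1)*δ) := by
          rw [hTdef]; simp only [dif_pos hex]; exact hex.choose_spec
        have hd := hFdist (T i) hTi.1 s hs
        have habs : |G (T i) - G s| ≤ δ := by
          obtain ⟨h1, h2⟩ := hTi.2
          rw [abs_le]
          constructor <;> nlinarith
        exact hd.trans habs
    have hsub : cthickening δ S ⊆ ⋃ i ∈ Finset.range N, closedBall (F (T i)) (3*δ) := by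
      intro w hw
      have h1 : EMetric.infEdist w S ≤ ENNReal.ofReal δ := mem_cthickening_iff.mp hw
      have h2 : EMetric.infEdist w S < ENNReal.ofReal (2*δ) :=
        lt_of_le_of_lt h1 (by rw [ENNReal.ofReal_lt_ofReal_iff (by positivity)]; linarith)
      obtain ⟨p, hpS, hpw⟩ := EMetric.infEdist_lt_iff.mp h2
      have h3 : dist w p < 2*δ := by
        rw [edist_dist] at hpw
        exact (ENNReal.ofReal_lt_ofReal_iff_of_nonneg dist_nonneg).mp hpw
      obtain ⟨i, hiN, hpd⟩ := hcov p hpS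
      refine mem_iUnion₂.mpr ⟨i, Finset.mem_range.mpr hiN, ?_⟩
      rw [mem_closedBall]
      calc dist w (F (T i)) ≤ dist w p + dist p (F (T i)) := dist_triangle _ _ _
        _ ≤ 2*δ + δ := add_le_add h3.le hpd
        _ = 3*δ := by ring
    have hvol : volume (cthickening δ S)
        ≤ (N:ENNReal) * (ENNReal.ofReal ((3*δ)^3) * K₀) := by
      calc volume (cthickening δ S)
          ≤ volume (⋃ i ∈ Finset.range N, closedBall (F (T i)) (3*δ)) :=
            measure_mono hsub
        _ ≤ ∑ i ∈ Finset.range N, volume (closedBall (F (T i)) (3*δ)) :=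
            measure_biUnion_finset_le _ _
        _ = (N:ENNReal) * (ENNReal.ofReal ((3*δ)^3) * K₀) := by
            have he : ∀ i : ℕ, volume (closedBall (F (T i)) (3*δ))
                = ENNReal.ofReal ((3*δ)^3) * K₀ := by
              intro i
              rw [Measure.addHaar_closedBall volume _ (by positivity : (0:ℝ) ≤ 3*δ),
                hfr, hK₀def]
            rw [Finset.sum_congr rfl (fun i _ => he i), Finset.sum_const,
              Finset.card_range, nsmul_eq_mul]
    refine hvol.trans ?_
    rw [hK₀eq, ← ENNReal.ofReal_mul (by positivity),
      ← ENNReal.ofReal_natCast N, ← ENNReal.ofReal_mul (Nat.cast_nonneg N)]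
    apply ENNReal.ofReal_le_ofReal
    have hfl : (⌊G₁/δ⌋₊:ℝ) * δ ≤ G₁ := by
      have h1 := Nat.floor_le (le_of_lt (div_pos hG₁ hδ))
      have h2 := mul_le_mul_of_nonneg_right h1 hδ.le
      rwa [div_mul_cancel₀ _ (ne_of_gt hδ)] at h2
    have hNle : (N:ℝ) * δ ≤ G₁ + δ := by
      rw [hNdef]; push_cast; nlinarith
    calc (N:ℝ) * ((3*δ)^3 * k₀) = ((N:ℝ)*δ) * (27*δ^2*k₀) := by ring
      _ ≤ (G₁ + δ) * (27*δ^2*k₀) := mul_le_mul_of_nonneg_right hNle (by positivity)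
      _ ≤ (G₁ + δ₀) * (27*δ^2*k₀) := mul_le_mul_of_nonneg_right (by linarith) (by positivity)
      _ = 27*(G₁ + δ₀)*k₀*δ^2 := by ring


/-- The 3D system `ṙ = a₁ r z`, `φ̇ = 1`, `ż = b₂ z²` (cylindrical
coordinates): if `a₁/b₂ > 1`, a spiral trajectory `S` near the origin has
Minkowski dimension `1` (Hölderian spirals). -/
theorem stmt5 (a₁ b₂ : ℝ) (h : 1 < a₁ / b₂)
    (t₁ : ℝ) (r φ z : ℝ → ℝ) (D : Set ℝ)
    (hD : (D = Set.Ici t₁ ∧ Filter.Tendsto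
            (fun t => pt3 (r t * Real.cos (φ t)) (r t * Real.sin (φ t)) (z t))
            Filter.atTop (nhds (0 : E3))) ∨
          (D = Set.Iic t₁ ∧ Filter.Tendsto
            (fun t => pt3 (r t * Real.cos (φ t)) (r t * Real.sin (φ t)) (z t))
            Filter.atBot (nhds (0 : E3))))
    (hr : ∀ t ∈ D, 0 < r t) (hz : ∀ t ∈ D, 0 < z t)
    (hoder : ∀ t ∈ D, HasDerivAt r (a₁ * r t * z t) t)
    (hodeφ : ∀ t ∈ D, HasDerivAt φ 1 t)
    (hodez : ∀ t ∈ D, HasDerivAt z (b₂ * (z t) ^ 2) t)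
    (S : Set E3)
    (hS : S = (fun t => pt3 (r t * Real.cos (φ t)) (r t * Real.sin (φ t)) (z t)) '' D) :
    HasMinkDim volume 3 S 1 := by
  rcases hD with ⟨hDeq, -⟩ | ⟨hDeq, -⟩
  · subst hDeq
    exact spiral_dim a₁ b₂ 1 h (by norm_num) t₁ r φ z hr hz hoder hodeφ hodez S hS
  · subst hDeq
    have h' : 1 < (-a₁) / (-b₂) := by rwa [neg_div_neg_eq]
    have hmem : ∀ t : ℝ, t ∈ Set.Ici (-t₁) → -t ∈ Set.Iic t₁ := by
      intro t ht
      simp only [Set.mem_Ici] at ht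
      simp only [Set.mem_Iic]
      linarith
    refine spiral_dim (-a₁) (-b₂) (-1) h' (by norm_num) (-t₁)
      (fun t => r (-t)) (fun t => φ (-t)) (fun t => z (-t))
      (fun t ht => hr (-t) (hmem t ht)) (fun t ht => hz (-t) (hmem t ht))
      ?_ ?_ ?_ S ?_
    · intro t ht
      have h1 := (hoder (-t) (hmem t ht)).comp t (hasDerivAt_neg t)
      refine h1.congr_deriv (Eq.symm ?_)
      ring
    · intro t ht
      have h1 := (hodeφ (-t) (hmem t ht)).comp t (hasDerivAt_neg t)
      simpa [Function.comp_def] using h1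
    · intro t ht
      have h1 := (hodez (-t) (hmem t ht)).comp t (hasDerivAt_neg t)
      refine h1.congr_deriv (Eq.symm ?_)
      ring
    · rw [hS]
      have himg : Set.Iic t₁ = Neg.neg '' Set.Ici (-t₁) := by
        ext x
        simp only [Set.mem_Iic, Set.mem_image, Set.mem_Ici]
        constructor
        · intro hx
          exact ⟨-x, by linarith, by ring⟩
        · rintro ⟨y, hy, rfl⟩
          linarith
      rw [himg, ← Set.image_comp]
      rfl
end

section
/- Consider the three-dimensional system given in cylindrical coordinates by ṙ = a_1 r z, φ̇ = 1, ż = b_2 z², with parameters a_1, b_2 ∈ ℝ. If a_1/b_2 < 0, then the origin of ℝ^3 is not an accumulation point of any trajectory S of this system (with r > 0, z > 0 initially). -/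
open MeasureTheory Filter Metric Set Topology

/-- The 3D system `ṙ = a₁ r z`, `φ̇ = 1`, `ż = b₂ z²` (cylindrical
coordinates): if `a₁/b₂ < 0`, the origin of ℝ³ is not an accumulation point of any
trajectory with `r > 0`, `z > 0` initially. -/
theorem stmt6 (a₁ b₂ : ℝ) (h : a₁ / b₂ < 0)
    (t₀ : ℝ) (D : Set ℝ) (hD : D.OrdConnected) (ht₀ : t₀ ∈ D)
    (r φ z : ℝ → ℝ)
    (hr0 : 0 < r t₀) (hz0 : 0 < z t₀)   -- `r > 0`, `z > 0` initially
    (hoder : ∀ t ∈ D, HasDerivAt r (a₁ * r t * z t) t)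
    (hodeφ : ∀ t ∈ D, HasDerivAt φ 1 t)
    (hodez : ∀ t ∈ D, HasDerivAt z (b₂ * (z t) ^ 2) t)
    (γ : ℝ → E3)
    (hγ : ∀ t, γ t = pt3 (r t * Real.cos (φ t)) (r t * Real.sin (φ t)) (z t)) :
    -- the origin is not an accumulation point: it is not the case that the trajectory
    -- enters every neighborhood of the origin at arbitrarily large times in `D`
    ¬ (∀ V ∈ nhds (0 : E3), ∀ t ∈ D, ∃ s ∈ D, t ≤ s ∧ γ s ∈ V) := by

  intro hacc
  have hb₂ : b₂ ≠ 0 := by rintro rfl; simp at h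
  set k := a₁ / b₂ with hk
  have hkneg : k < 0 := h
  have ha₁ : a₁ = k * b₂ := by rw [hk, div_mul_cancel₀ _ hb₂]
  have hsub : ∀ s ∈ D, Icc t₀ s ⊆ D := fun s hs => hD.out ht₀ hs
  -- continuity of z at points of D
  have hzc : ∀ t ∈ D, ContinuousAt z t := fun t ht => (hodez t ht).continuousAt
  -- z is positive on [t₀, s] for s ∈ D
  have hzpos : ∀ s ∈ D, ∀ t ∈ Icc t₀ s, 0 < z t := by
    intro s hs
    by_contra hcon
    push_neg at hcon
    obtain ⟨t₁, ht₁, hz₁⟩ := hcon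
    have hsub1 : Icc t₀ t₁ ⊆ D := hD.out ht₀ ((hsub s hs) ht₁)
    set T : Set ℝ := {t | t ∈ Icc t₀ t₁ ∧ z t ≤ 0} with hT
    have hT1 : t₁ ∈ T := ⟨⟨ht₁.1, le_refl _⟩, hz₁⟩
    have hTne : T.Nonempty := ⟨t₁, hT1⟩
    have hTbdd : BddBelow T := ⟨t₀, fun x hx => hx.1.1⟩
    set t₂ := sInf T with ht₂def
    have ht₂le : t₂ ≤ t₁ := csInf_le hTbdd hT1
    have ht₂ge : t₀ ≤ t₂ := le_csInf hTne fun x hx => hx.1.1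
    have ht₂mem : t₂ ∈ Icc t₀ t₁ := ⟨ht₂ge, ht₂le⟩
    have ht₂D : t₂ ∈ D := hsub1 ht₂mem
    -- z t₂ ≤ 0
    have ht₂cl : t₂ ∈ closure T := csInf_mem_closure hTne hTbdd
    haveI : (nhdsWithin t₂ T).NeBot := mem_closure_iff_nhdsWithin_neBot.1 ht₂cl
    have hzt₂le : z t₂ ≤ 0 := by
      refine le_of_tendsto (f := z) (b := 0)
        ((hzc t₂ ht₂D).continuousWithinAt (s := T)).tendsto ?_
      exact eventually_nhdsWithin_of_forall fun x hx => hx.2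
    -- points strictly before t₂ have z > 0
    have hbefore : ∀ t, t₀ ≤ t → t < t₂ → 0 < z t := by
      intro t htt₀ htt₂
      by_contra hzt
      push_neg at hzt
      exact absurd (csInf_le hTbdd ⟨⟨htt₀, le_trans htt₂.le ht₂le⟩, hzt⟩) (not_le.2 htt₂)
    have ht₀lt : t₀ < t₂ := by
      rcases lt_or_eq_of_le ht₂ge with h' | h'
      · exact h'
      · exact absurd hzt₂le (not_le.2 (h' ▸ hz0))
    -- z t₂ = 0 by continuity from the left
    have hzt₂ : z t₂ = 0 := by
      refine le_antisymm hzt₂le ?_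
      have hcl2 : t₂ ∈ closure (Ico t₀ t₂) := by
        rw [closure_Ico (ne_of_lt ht₀lt)]; exact ⟨ht₂ge, le_refl _⟩
      haveI : (nhdsWithin t₂ (Ico t₀ t₂)).NeBot := mem_closure_iff_nhdsWithin_neBot.1 hcl2
      refine ge_of_tendsto (f := z)
        ((hzc t₂ ht₂D).continuousWithinAt (s := Ico t₀ t₂)).tendsto ?_
      exact eventually_nhdsWithin_of_forall fun x hx => (hbefore x hx.1 hx.2).le
    -- z ≥ 0 on [t₀, t₂]
    have hznn : ∀ t ∈ Icc t₀ t₂, 0 ≤ z t := by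
      intro t ht
      rcases lt_or_eq_of_le ht.2 with h' | h'
      · exact (hbefore t ht.1 h').le
      · rw [h', hzt₂]
    have hsub2 : Icc t₀ t₂ ⊆ D := hD.out ht₀ ht₂D
    -- bound M on -(b₂ * z) over [t₀, t₂]
    obtain ⟨tM, htM, hM'⟩ := isCompact_Icc.exists_isMaxOn (f := fun t => -(b₂ * z t))
      (nonempty_Icc.2 ht₀lt.le)
      (fun t ht => ((continuous_const.continuousAt).mul (hzc t (hsub2 ht))).neg.continuousWithinAt)
    have hM : ∀ t ∈ Icc t₀ t₂, -(b₂ * z t) ≤ -(b₂ * z tM) := fun t ht => hM' ht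
    set M := -(b₂ * z tM) with hMdef
    have hMb : ∀ t ∈ Icc t₀ t₂, 0 ≤ b₂ * z t + M := by
      intro t ht
      have := hM t ht
      linarith
    -- g = z * exp(M t) is monotone on [t₀, t₂]
    set g : ℝ → ℝ := fun t => z t * Real.exp (M * t) with hg
    have hgderiv : ∀ t ∈ Icc t₀ t₂,
        HasDerivAt g (z t * (b₂ * z t + M) * Real.exp (M * t)) t := by
      intro t ht
      have h0 : HasDerivAt (fun t : ℝ => M * t) M t := by
        simpa using (hasDerivAt_id t).const_mul M
      have h1 : HasDerivAt (fun t : ℝ => Real.exp (M * t)) (Real.exp (M * t) * M) t :=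
        (Real.hasDerivAt_exp (M * t)).comp t h0
      have := (hodez t (hsub2 ht)).mul h1
      refine this.congr_deriv ?_
      ring
    have hgmono : MonotoneOn g (Icc t₀ t₂) := by
      refine monotoneOn_of_deriv_nonneg (convex_Icc _ _)
        (fun t ht => (hgderiv t ht).continuousAt.continuousWithinAt)
        (fun t ht => ((hgderiv t (interior_subset ht)).differentiableAt).differentiableWithinAt)
        ?_
      intro t ht
      rw [interior_Icc] at ht
      rw [(hgderiv t ⟨ht.1.le, ht.2.le⟩).deriv]
      have h1 := hznn t ⟨ht.1.le, ht.2.le⟩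
      have h2 := hMb t ⟨ht.1.le, ht.2.le⟩
      positivity
    have := hgmono ⟨le_refl _, ht₀lt.le⟩ ⟨ht₀lt.le, le_refl _⟩ ht₀lt.le
    rw [hg] at this
    simp only [hzt₂, zero_mul] at this
    nlinarith [Real.exp_pos (M * t₀), this]
  -- the conserved quantity H = r * z ^ (-k)
  have hH : ∀ s ∈ D, t₀ ≤ s → r s * z s ^ (-k) = r t₀ * z t₀ ^ (-k) := by
    intro s hs hts
    have hsub2 : Icc t₀ s ⊆ D := hsub s hs
    have hHd : ∀ t ∈ Icc t₀ s, HasDerivAt (fun t => r t * z t ^ (-k)) 0 t := by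
      intro t ht
      have hzt : 0 < z t := hzpos s hs t ht
      have htD : t ∈ D := hsub2 ht
      have hrpow : HasDerivAt (fun x : ℝ => x ^ (-k)) ((-k) * z t ^ (-k - 1)) (z t) :=
        Real.hasDerivAt_rpow_const (Or.inl (ne_of_gt hzt))
      have hcomp : HasDerivAt (fun t => z t ^ (-k)) ((-k) * z t ^ (-k - 1) * (b₂ * z t ^ 2)) t :=
        hrpow.comp t (hodez t htD)
      have hprod := (hoder t htD).mul hcomp
      refine hprod.congr_deriv (Eq.symm ?_)
      have e1 : z t * z t ^ (-k) = z t ^ (1 - k) := by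
        rw [show (1 : ℝ) - k = 1 + -k by ring, Real.rpow_add hzt, Real.rpow_one]
      have e2 : z t ^ (-k - 1) * z t ^ 2 = z t ^ (1 - k) := by
        rw [show (z t) ^ 2 = z t ^ ((2 : ℕ) : ℝ) by rw [Real.rpow_natCast],
          ← Real.rpow_add hzt]
        congr 1
        ring
      rw [ha₁]
      linear_combination (k * b₂ * r t) * e2 - (k * b₂ * r t) * e1
    have := constant_of_has_deriv_right_zero
      (f := fun t => r t * z t ^ (-k)) (a := t₀) (b := s)
      (fun t ht => (hHd t ht).continuousAt.continuousWithinAt)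
      (fun t ht => (hHd t ⟨ht.1, ht.2.le⟩).hasDerivWithinAt)
    exact this s ⟨hts, le_refl _⟩
  -- conclude
  set c := r t₀ * z t₀ ^ (-k) with hc
  have hcpos : 0 < c := mul_pos hr0 (Real.rpow_pos_of_pos hz0 _)
  set ε := min c 1 / 2 with hε
  have hεpos : 0 < ε := by
    have := lt_min hcpos one_pos
    simp only [hε]; positivity
  obtain ⟨s, hsD, hts, hsmem⟩ := hacc (Metric.ball 0 ε) (Metric.ball_mem_nhds _ hεpos) t₀ ht₀
  have hnorm : ‖γ s‖ < ε := by rwa [← mem_ball_zero_iff]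
  have hzs : 0 < z s := hzpos s hsD s ⟨hts, le_refl _⟩
  -- norm bounds
  have hγs : ‖γ s‖ = Real.sqrt ((r s * Real.cos (φ s)) ^ 2 + (r s * Real.sin (φ s)) ^ 2
      + z s ^ 2) := by
    rw [hγ s, pt3, EuclideanSpace.norm_eq]
    congr 1
    rw [Fin.sum_univ_three]
    simp only [WithLp.equiv_symm_apply, WithLp.ofLp_toLp, Matrix.cons_val_zero, Matrix.cons_val_one,
      Matrix.head_cons, Matrix.cons_val_two, Matrix.tail_cons, Real.norm_eq_abs, sq_abs]
  have hsum : (r s * Real.cos (φ s)) ^ 2 + (r s * Real.sin (φ s)) ^ 2 + z s ^ 2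
      = r s ^ 2 + z s ^ 2 := by
    have := Real.sin_sq_add_cos_sq (φ s)
    nlinarith [this]
  have hnz : |z s| ≤ ‖γ s‖ := by
    rw [hγs, hsum, ← Real.sqrt_sq_eq_abs]
    apply Real.sqrt_le_sqrt
    nlinarith [sq_nonneg (r s)]
  have hnr : |r s| ≤ ‖γ s‖ := by
    rw [hγs, hsum, ← Real.sqrt_sq_eq_abs]
    apply Real.sqrt_le_sqrt
    nlinarith [sq_nonneg (z s)]
  rcases le_or_gt ε (z s) with hcase | hcase
  · have : ε ≤ ‖γ s‖ := le_trans (le_trans hcase (le_abs_self _)) hnz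
    linarith
  · -- z s < ε ≤ 1/2, so z s ^ (-k) < 1 and r s = c / z s ^ (-k) > c
    have hzlt1 : z s < 1 := by
      have : ε ≤ 1 / 2 := by
        rw [hε]; have := min_le_right c 1; linarith
      linarith
    have hpowlt : z s ^ (-k) < 1 :=
      Real.rpow_lt_one hzs.le hzlt1 (by linarith)
    have hpowpos : 0 < z s ^ (-k) := Real.rpow_pos_of_pos hzs _
    have hrs : r s * z s ^ (-k) = c := hH s hsD hts
    have hrsge : c < r s := by
      nlinarith [hrs, hpowpos, hpowlt, hcpos]
    have hεc : ε < c := by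
      rw [hε]; have := min_le_left c 1; have := lt_min hcpos one_pos; linarith [min_le_left c 1]
    have : ε ≤ ‖γ s‖ := le_trans (le_trans (by linarith) (le_abs_self (r s))) hnr
    linarith
end

section
/- Consider the planar system ẋ = −n y^{2n−1} ± n x^m y^{n−1}(x^{2m}+y^{2n})^k, ẏ = m x^{2m−1} ± m x^{m−1} y^n (x^{2m}+y^{2n})^k, where m, n are odd positive integers with m + n > 2, m ≠ n, and k ∈ ℕ, written in (n,m)-polar coordinates (x,y) = (r^n Cs(φ), r^m Sn(φ)). If k > 0, then any spiral trajectory S of the system near the origin is comparable (in the (n,m)-polar radius) with the power spiral r = φ^{−1/(2mnk)}. -/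
open MeasureTheory Filter Metric Set Topology

section SpiralAux
open Set Filter

-- displacement lemma
lemma aux_le_displacement (f f' : ℝ → ℝ) (hf : ∀ x, HasDerivAt f (f' x) x)
    {a b c : ℝ} (hab : a ≤ b) (hc : ∀ x ∈ Set.Icc a b, f' x ≤ c) :
    f b - f a ≤ c * (b - a) := by
  have hmono : MonotoneOn (fun x => c * x - f x) (Icc a b) := by
    apply monotoneOn_of_deriv_nonneg (convex_Icc a b)
    · have hdf : Differentiable ℝ f := fun x => (hf x).differentiableAt
      have : Continuous f := hdf.continuous
      exact ((continuous_const.mul continuous_id).sub this).continuousOn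
    · intro x hx
      exact (((hasDerivAt_id x).const_mul c).sub (hf x)).differentiableAt.differentiableWithinAt
    · intro x hx
      rw [interior_Icc] at hx
      have hd : deriv (fun x => c * x - f x) x = c - f' x := by
        have := (((hasDerivAt_id x).const_mul c).sub (hf x)).deriv
        simpa [Pi.sub_def] using this
      rw [hd]
      have := hc x (Ioo_subset_Icc_self hx)
      linarith
  have := hmono (left_mem_Icc.2 hab) (right_mem_Icc.2 hab) hab
  simp only at this
  linarith

lemma aux_ge_displacement (f f' : ℝ → ℝ) (hf : ∀ x, HasDerivAt f (f' x) x)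
    {a b c : ℝ} (hab : a ≤ b) (hc : ∀ x ∈ Set.Icc a b, c ≤ f' x) :
    c * (b - a) ≤ f b - f a := by
  have := aux_le_displacement (fun x => -f x) (fun x => -f' x)
    (fun x => (hf x).neg) hab (c := -c) (fun x hx => by have := hc x hx; simp; linarith)
  simp only [neg_sub_neg] at this
  linarith

lemma aux_lip (f f' : ℝ → ℝ) (hf : ∀ x, HasDerivAt f (f' x) x)
    {a b c : ℝ} (hab : a ≤ b) (hc : ∀ x ∈ Set.Icc a b, |f' x| ≤ c) :
    |f b - f a| ≤ c * (b - a) := by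
  rw [abs_le]
  constructor
  · have := aux_ge_displacement f f' hf hab (fun x hx => (abs_le.1 (hc x hx)).1)
    nlinarith [this]
  · exact aux_le_displacement f f' hf hab (fun x hx => (abs_le.1 (hc x hx)).2)

lemma aux_sign (f : ℝ → ℝ) (hf : Continuous f) {a b : ℝ}
    (hne : ∀ x ∈ Icc a b, f x ≠ 0) :
    (∀ x ∈ Icc a b, 0 < f x) ∨ (∀ x ∈ Icc a b, f x < 0) := by
  by_contra hcon
  push_neg at hcon
  obtain ⟨⟨x, hx, hfx⟩, ⟨y, hy, hfy⟩⟩ := hcon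
  have hfx' : f x < 0 := lt_of_le_of_ne hfx (hne x hx)
  have hfy' : 0 < f y := lt_of_le_of_ne hfy (Ne.symm (hne y hy))
  have hsub : uIcc x y ⊆ Icc a b := by
    exact (ordConnected_Icc).uIcc_subset hx hy
  have h0 : (0:ℝ) ∈ uIcc (f x) (f y) := by
    rw [mem_uIcc]; left; exact ⟨le_of_lt hfx', le_of_lt hfy'⟩
  obtain ⟨z, hz, hfz⟩ := intermediate_value_uIcc (hf.continuousOn) h0
  exact hne z (hsub hz) hfz


section
variable (m n : ℕ) (Cs Sn : ℝ → ℝ)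
  (hm : 1 ≤ m) (hn : 1 ≤ n)
  (hCs : ∀ φ : ℝ, HasDerivAt Cs (-(n : ℝ) * (Sn φ) ^ (2 * n - 1)) φ)
  (hSn : ∀ φ : ℝ, HasDerivAt Sn ((m : ℝ) * (Cs φ) ^ (2 * m - 1)) φ)
  (hCs0 : Cs 0 = 1) (hSn0 : Sn 0 = 0)

include hCs hSn hCs0 hSn0 hm hn in
lemma pyth : ∀ φ : ℝ, Cs φ ^ (2*m) + Sn φ ^ (2*n) = 1 := by
  intro φ
  have hF : ∀ x : ℝ, HasDerivAt (fun t => Cs t ^ (2*m) + Sn t ^ (2*n)) 0 x := by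
    intro x
    have h1 := ((hCs x).pow (2*m))
    have h2 := ((hSn x).pow (2*n))
    have := h1.add h2
    refine this.congr_deriv ?_
    push_cast
    ring
  have hconst : ∀ x y : ℝ, (fun t => Cs t ^ (2*m) + Sn t ^ (2*n)) x
      = (fun t => Cs t ^ (2*m) + Sn t ^ (2*n)) y := by
    intro x y
    apply is_const_of_deriv_eq_zero (fun t => (hF t).differentiableAt)
    intro t; exact (hF t).deriv
  have := hconst φ 0
  simp only [hCs0, hSn0] at this
  rw [this, one_pow, zero_pow, add_zero]
  positivity
end


section
variable {m n : ℕ} {Cs Sn : ℝ → ℝ}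

lemma habs {f : ℝ → ℝ} {j : ℕ} (hj : 1 ≤ j) (g : ℝ → ℝ) {k : ℕ}
    (hpyth : ∀ φ : ℝ, f φ ^ (2*j) + g φ ^ (2*k) = 1) (φ : ℝ) : |f φ| ≤ 1 := by
  by_contra hcon
  push_neg at hcon
  have h1 : (1:ℝ) < |f φ| ^ (2*j) := one_lt_pow₀ hcon (by omega)
  have h2 : |f φ| ^ (2*j) = f φ ^ (2*j) := by
    rw [← abs_pow, abs_of_nonneg]
    exact Even.pow_nonneg ⟨j, by ring⟩ _
  have h3 : (0:ℝ) ≤ g φ ^ (2*k) := Even.pow_nonneg ⟨k, by ring⟩ _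
  have := hpyth φ
  nlinarith

lemma claim1 (hm : 1 ≤ m) (hn : 1 ≤ n)
    (hCs : ∀ φ : ℝ, HasDerivAt Cs (-(n : ℝ) * (Sn φ) ^ (2 * n - 1)) φ)
    (hSn : ∀ φ : ℝ, HasDerivAt Sn ((m : ℝ) * (Cs φ) ^ (2 * m - 1)) φ)
    (hpyth : ∀ φ : ℝ, Cs φ ^ (2*m) + Sn φ ^ (2*n) = 1) (a : ℝ) :
    ∃ t₀ ∈ Icc a (a + 5/(n:ℝ)), Sn t₀ ^ (2*n) ≤ 1/2 := by
  have hnR : (0:ℝ) < n := by exact_mod_cast hn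
  have hCabs : ∀ φ, |Cs φ| ≤ 1 := habs hm Sn hpyth
  have hSabs : ∀ φ, |Sn φ| ≤ 1 := habs hn Cs (fun φ => by rw [add_comm]; exact hpyth φ)
  by_contra hcon
  push_neg at hcon
  have hI : a ≤ a + 5/(n:ℝ) := le_add_of_nonneg_right (by positivity)
  set b := a + 5/(n:ℝ) with hb
  have key : ∀ t ∈ Icc a b, (1:ℝ)/2 ≤ |Sn t| ^ (2*n - 1) := by
    intro t ht
    have h1 : |Sn t| ^ (2*n) ≤ |Sn t| ^ (2*n-1) :=
      pow_le_pow_of_le_one (abs_nonneg _) (hSabs t) (by omega)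
    have h2 : |Sn t| ^ (2*n) = Sn t ^ (2*n) := by
      rw [← abs_pow, abs_of_nonneg]; exact Even.pow_nonneg ⟨n, by ring⟩ _
    have := hcon t ht
    linarith
  have hne : ∀ t ∈ Icc a b, Sn t ≠ 0 := by
    intro t ht h0
    have := key t ht
    rw [h0, abs_zero, zero_pow (by omega)] at this
    linarith
  have hdS : Differentiable ℝ Sn := fun x => (hSn x).differentiableAt
  have hScont : Continuous Sn := hdS.continuous
  rcases aux_sign Sn hScont hne with hpos | hneg
  · -- Sn > 0 : Cs' ≤ -n/2
    have hd : ∀ t ∈ Icc a b, -(n:ℝ) * Sn t ^ (2*n-1) ≤ -(n:ℝ)/2 := by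
      intro t ht
      have h1 : Sn t ^ (2*n-1) = |Sn t| ^ (2*n-1) := by
        rw [abs_of_pos (hpos t ht)]
      have := key t ht
      rw [h1]
      nlinarith
    have hdisp := aux_le_displacement Cs _ hCs hI hd
    have e1 : -(n:ℝ)/2 * (b - a) = -(5/2) := by
      rw [hb]; field_simp; ring
    rw [e1] at hdisp
    have h3 := abs_le.1 (hCabs a)
    have h4 := abs_le.1 (hCabs b)
    linarith
  · -- Sn < 0 : Cs' ≥ n/2
    have hd : ∀ t ∈ Icc a b, (n:ℝ)/2 ≤ -(n:ℝ) * Sn t ^ (2*n-1) := by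
      intro t ht
      have h1 : Sn t ^ (2*n-1) ≤ -(1/2) := by
        have habs' : |Sn t ^ (2*n-1)| = |Sn t| ^ (2*n-1) := abs_pow _ _
        have hneg' : Sn t ^ (2*n-1) < 0 :=
          Odd.pow_neg ⟨n-1, by omega⟩ (hneg t ht)
        have := key t ht
        rw [abs_of_neg hneg'] at habs'
        linarith
      nlinarith
    have hdisp := aux_ge_displacement Cs _ hCs hI hd
    have e1 : (n:ℝ)/2 * (b - a) = 5/2 := by
      rw [hb]; field_simp; ring
    rw [e1] at hdisp
    have h3 := abs_le.1 (hCabs a)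
    have h4 := abs_le.1 (hCabs b)
    linarith

lemma claim2 (hm : 1 ≤ m) (hn : 1 ≤ n)
    (hCs : ∀ φ : ℝ, HasDerivAt Cs (-(n : ℝ) * (Sn φ) ^ (2 * n - 1)) φ)
    (hSn : ∀ φ : ℝ, HasDerivAt Sn ((m : ℝ) * (Cs φ) ^ (2 * m - 1)) φ)
    (hpyth : ∀ φ : ℝ, Cs φ ^ (2*m) + Sn φ ^ (2*n) = 1) (t₀ : ℝ) :
    ∃ t₂ ∈ Icc t₀ (t₀ + 9/(m:ℝ)), 3/4 ≤ Sn t₂ ^ (2*n) := by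
  have hmR : (0:ℝ) < m := by exact_mod_cast hm
  have hCabs : ∀ φ, |Cs φ| ≤ 1 := habs hm Sn hpyth
  have hSabs : ∀ φ, |Sn φ| ≤ 1 := habs hn Cs (fun φ => by rw [add_comm]; exact hpyth φ)
  by_contra hcon
  push_neg at hcon
  have hI : t₀ ≤ t₀ + 9/(m:ℝ) := le_add_of_nonneg_right (by positivity)
  set b := t₀ + 9/(m:ℝ) with hb
  have key : ∀ t ∈ Icc t₀ b, (1:ℝ)/4 ≤ |Cs t| ^ (2*m - 1) := by
    intro t ht
    have h1 : |Cs t| ^ (2*m) ≤ |Cs t| ^ (2*m-1) :=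
      pow_le_pow_of_le_one (abs_nonneg _) (hCabs t) (by omega)
    have h2 : |Cs t| ^ (2*m) = Cs t ^ (2*m) := by
      rw [← abs_pow, abs_of_nonneg]; exact Even.pow_nonneg ⟨m, by ring⟩ _
    have h3 := hcon t ht
    have h4 := hpyth t
    linarith
  have hne : ∀ t ∈ Icc t₀ b, Cs t ≠ 0 := by
    intro t ht h0
    have := key t ht
    rw [h0, abs_zero, zero_pow (by omega)] at this
    linarith
  have hdC : Differentiable ℝ Cs := fun x => (hCs x).differentiableAt
  have hCcont : Continuous Cs := hdC.continuous
  rcases aux_sign Cs hCcont hne with hpos | hneg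
  · have hd : ∀ t ∈ Icc t₀ b, (m:ℝ)/4 ≤ (m:ℝ) * Cs t ^ (2*m-1) := by
      intro t ht
      have h1 : Cs t ^ (2*m-1) = |Cs t| ^ (2*m-1) := by rw [abs_of_pos (hpos t ht)]
      have := key t ht
      rw [h1]
      nlinarith
    have hdisp := aux_ge_displacement Sn _ hSn hI hd
    have e1 : (m:ℝ)/4 * (b - t₀) = 9/4 := by rw [hb]; field_simp; ring
    rw [e1] at hdisp
    have h3 := abs_le.1 (hSabs t₀)
    have h4 := abs_le.1 (hSabs b)
    linarith
  · have hd : ∀ t ∈ Icc t₀ b, (m:ℝ) * Cs t ^ (2*m-1) ≤ -(m:ℝ)/4 := by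
      intro t ht
      have h1 : Cs t ^ (2*m-1) ≤ -(1/4) := by
        have habs' : |Cs t ^ (2*m-1)| = |Cs t| ^ (2*m-1) := abs_pow _ _
        have hneg' : Cs t ^ (2*m-1) < 0 :=
          Odd.pow_neg ⟨m-1, by omega⟩ (hneg t ht)
        have := key t ht
        rw [abs_of_neg hneg'] at habs'
        linarith
      nlinarith
    have hdisp := aux_le_displacement Sn _ hSn hI hd
    have e1 : -(m:ℝ)/4 * (b - t₀) = -(9/4) := by rw [hb]; field_simp; ring
    rw [e1] at hdisp
    have h3 := abs_le.1 (hSabs t₀)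
    have h4 := abs_le.1 (hSabs b)
    linarith
end


lemma root_ge {x c : ℝ} {j : ℕ} (hj : 1 ≤ j) (hc : 0 ≤ c) (h : c ≤ x ^ (2*j)) :
    c ^ ((1:ℝ)/(2*j)) ≤ |x| := by
  have h2 : x ^ (2*j) = |x| ^ (2*j) := by
    rw [← abs_pow, abs_of_nonneg (Even.pow_nonneg ⟨j, by ring⟩ _)]
  have hexp : (0:ℝ) < 1/(2*j) := by positivity
  have := Real.rpow_le_rpow hc (h.trans_eq h2) (le_of_lt hexp)
  calc c ^ ((1:ℝ)/(2*j)) ≤ (|x| ^ (2*j)) ^ ((1:ℝ)/(2*j)) := this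
    _ = |x| := by
        rw [← Real.rpow_natCast |x| (2*j), ← Real.rpow_mul (abs_nonneg x)]
        have he : ((2*j:ℕ):ℝ) * ((1:ℝ)/(2*(j:ℝ))) = 1 := by
          have : (j:ℝ) ≠ 0 := by positivity
          push_cast
          field_simp
        rw [he, Real.rpow_one]

lemma root_le {x c : ℝ} {j : ℕ} (hj : 1 ≤ j) (h : x ^ (2*j) ≤ c) :
    |x| ≤ c ^ ((1:ℝ)/(2*j)) := by
  have h2 : x ^ (2*j) = |x| ^ (2*j) := by
    rw [← abs_pow, abs_of_nonneg (Even.pow_nonneg ⟨j, by ring⟩ _)]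
  have hexp : (0:ℝ) < 1/(2*j) := by positivity
  have h3 : |x| ^ (2*j) ≤ c := h2 ▸ h
  have := Real.rpow_le_rpow (by positivity) h3 (le_of_lt hexp)
  calc |x| = (|x| ^ (2*j)) ^ ((1:ℝ)/(2*j)) := by
        rw [← Real.rpow_natCast |x| (2*j), ← Real.rpow_mul (abs_nonneg x)]
        have he : ((2*j:ℕ):ℝ) * ((1:ℝ)/(2*(j:ℝ))) = 1 := by
          have : (j:ℝ) ≠ 0 := by positivity
          push_cast
          field_simp
        rw [he, Real.rpow_one]
    _ ≤ c ^ ((1:ℝ)/(2*j)) := this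


set_option maxHeartbeats 2000000 in
lemma window {m n : ℕ} {Cs Sn : ℝ → ℝ} (hmodd : Odd m) (hnodd : Odd n)
    (hCs : ∀ φ : ℝ, HasDerivAt Cs (-(n : ℝ) * (Sn φ) ^ (2 * n - 1)) φ)
    (hSn : ∀ φ : ℝ, HasDerivAt Sn ((m : ℝ) * (Cs φ) ^ (2 * m - 1)) φ)
    (hpyth : ∀ φ : ℝ, Cs φ ^ (2*m) + Sn φ ^ (2*n) = 1) (a : ℝ) :
    ((3/4:ℝ) ^ ((1:ℝ)/(2*(n:ℝ))) - (1/2:ℝ) ^ ((1:ℝ)/(2*(n:ℝ)))) / (8*(m:ℝ))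
      ≤ ∫ t in a..(a+14), Sn t ^ (n-1) * Cs t ^ (m-1) := by
  have hm : 1 ≤ m := hmodd.pos
  have hn : 1 ≤ n := hnodd.pos
  have hmR : (0:ℝ) < m := by exact_mod_cast hm
  have hnR : (0:ℝ) < n := by exact_mod_cast hn
  have hm1R : (1:ℝ) ≤ m := by exact_mod_cast hm
  have hn1R : (1:ℝ) ≤ n := by exact_mod_cast hn
  have hCabs : ∀ φ, |Cs φ| ≤ 1 := habs hm Sn hpyth
  have hSabs : ∀ φ, |Sn φ| ≤ 1 := habs hn Cs (fun φ => by rw [add_comm]; exact hpyth φ)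
  have hdS : Differentiable ℝ Sn := fun x => (hSn x).differentiableAt
  have hdC : Differentiable ℝ Cs := fun x => (hCs x).differentiableAt
  have hScont : Continuous Sn := hdS.continuous
  have hCcont : Continuous Cs := hdC.continuous
  set γ : ℝ := (3/4:ℝ) ^ ((1:ℝ)/(2*(n:ℝ))) - (1/2:ℝ) ^ ((1:ℝ)/(2*(n:ℝ))) with hγdef
  have hγpos : 0 < γ := by
    rw [hγdef]
    have := Real.rpow_lt_rpow (by norm_num : (0:ℝ) ≤ 1/2)
      (by norm_num : (1/2:ℝ) < 3/4) (by positivity : (0:ℝ) < 1/(2*(n:ℝ)))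
    linarith
  -- get t₀ and t₂
  obtain ⟨t₀, ht₀I, ht₀⟩ := claim1 hm hn hCs hSn hpyth a
  obtain ⟨t₂, ht₂I, ht₂⟩ := claim2 hm hn hCs hSn hpyth t₀
  -- t₂' : first time in [t₀,t₂] reaching 3/4
  set g : ℝ → ℝ := fun t => Sn t ^ (2*n) with hgdef
  have hgcont : Continuous g := hScont.pow _
  set S2 : Set ℝ := {t ∈ Icc t₀ t₂ | 3/4 ≤ g t} with hS2def
  have hS2closed : IsClosed S2 := isClosed_Icc.inter (isClosed_le continuous_const hgcont)
  have hS2ne : S2.Nonempty := ⟨t₂, ⟨⟨ht₂I.1, le_refl _⟩, ht₂⟩⟩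
  have hS2bdd : BddBelow S2 := ⟨t₀, fun t ht => ht.1.1⟩
  set t₂' : ℝ := sInf S2 with ht₂'def
  have ht₂'mem : t₂' ∈ S2 := hS2closed.csInf_mem hS2ne hS2bdd
  have ht₂'lb : t₀ ≤ t₂' := ht₂'mem.1.1
  have ht₂'ub : t₂' ≤ t₂ := ht₂'mem.1.2
  have hlt : ∀ t, t₀ ≤ t → t < t₂' → g t < 3/4 := by
    intro t ht1 ht2
    by_contra hcon
    push_neg at hcon
    have : t ∈ S2 := ⟨⟨ht1, ht2.le.trans ht₂'ub⟩, hcon⟩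
    exact absurd (csInf_le hS2bdd this) (not_le.2 ht2)
  -- t₁ : last time in [t₀,t₂'] with g ≤ 1/2
  set S1 : Set ℝ := {t ∈ Icc t₀ t₂' | g t ≤ 1/2} with hS1def
  have hS1closed : IsClosed S1 := isClosed_Icc.inter (isClosed_le hgcont continuous_const)
  have hS1ne : S1.Nonempty := ⟨t₀, ⟨⟨le_refl _, ht₂'lb⟩, ht₀⟩⟩
  have hS1bdd : BddAbove S1 := ⟨t₂', fun t ht => ht.1.2⟩
  set t₁ : ℝ := sSup S1 with ht₁def
  have ht₁mem : t₁ ∈ S1 := hS1closed.csSup_mem hS1ne hS1bdd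
  have ht₁lb : t₀ ≤ t₁ := ht₁mem.1.1
  have ht₁ub : t₁ ≤ t₂' := ht₁mem.1.2
  have hgt : ∀ t, t₁ < t → t ≤ t₂' → 1/2 < g t := by
    intro t ht1 ht2
    by_contra hcon
    push_neg at hcon
    have : t ∈ S1 := ⟨⟨ht₁lb.trans ht1.le, ht2⟩, hcon⟩
    exact absurd (le_csSup hS1bdd this) (not_le.2 ht1)
  have ht₁lt : t₁ < t₂' := by
    rcases lt_or_eq_of_le ht₁ub with h | h
    · exact h
    · exfalso
      have h1 : g t₁ ≤ 1/2 := ht₁mem.2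
      have h2 : 3/4 ≤ g t₂' := ht₂'mem.2
      rw [h] at h1
      linarith
  -- band bounds on [t₁, t₂']
  have hgt₁ : 1/2 ≤ g t₁ := by
    have htend : Filter.Tendsto g (nhdsWithin t₁ (Ioi t₁)) (nhds (g t₁)) :=
      (hgcont.continuousAt).continuousWithinAt
    refine ge_of_tendsto htend ?_
    have hIoo : Ioo t₁ t₂' ∈ nhdsWithin t₁ (Ioi t₁) :=
      Ioo_mem_nhdsGT_of_mem ⟨le_refl _, ht₁lt⟩
    filter_upwards [hIoo] with s hs
    exact (hgt s hs.1 hs.2.le).le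
  have hgt₂' : g t₂' ≤ 3/4 := by
    have htend : Filter.Tendsto g (nhdsWithin t₂' (Iio t₂')) (nhds (g t₂')) :=
      (hgcont.continuousAt).continuousWithinAt
    refine le_of_tendsto htend ?_
    have hIoo : Ioo t₁ t₂' ∈ nhdsWithin t₂' (Iio t₂') :=
      Ioo_mem_nhdsLT_of_mem ⟨ht₁lt, le_refl _⟩
    filter_upwards [hIoo] with s hs
    exact (hlt s (ht₁lb.trans hs.1.le) hs.2).le
  have band : ∀ t ∈ Icc t₁ t₂', 1/2 ≤ g t ∧ g t ≤ 3/4 := by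
    intro t ht
    constructor
    · rcases lt_or_eq_of_le ht.1 with h | h
      · exact (hgt t h ht.2).le
      · rw [← h]; exact hgt₁
    · rcases lt_or_eq_of_le ht.2 with h | h
      · exact (hlt t (ht₁lb.trans ht.1) h).le
      · rw [h]; exact hgt₂'
  -- pointwise lower bound on integrand on [t₁,t₂']
  have hband_h : ∀ t ∈ Icc t₁ t₂', (1:ℝ)/8 ≤ Sn t ^ (n-1) * Cs t ^ (m-1) := by
    intro t ht
    obtain ⟨hb1, hb2⟩ := band t ht
    have hS2le : Sn t ^ 2 ≤ 1 := by
      have := hSabs t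
      nlinarith [abs_nonneg (Sn t), sq_abs (Sn t)]
    have hC2le : Cs t ^ 2 ≤ 1 := by
      have := hCabs t
      nlinarith [abs_nonneg (Cs t), sq_abs (Cs t)]
    obtain ⟨jn, hjn⟩ := Nat.Odd.sub_odd hnodd odd_one
    obtain ⟨jm, hjm⟩ := Nat.Odd.sub_odd hmodd odd_one
    have hSn1 : Sn t ^ (2*n) ≤ Sn t ^ (n-1) := by
      rw [show n - 1 = 2 * jn by omega, pow_mul, pow_mul]
      exact pow_le_pow_of_le_one (sq_nonneg _) hS2le (by omega)
    have hCs1 : Cs t ^ (2*m) ≤ Cs t ^ (m-1) := by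
      rw [show m - 1 = 2 * jm by omega, pow_mul, pow_mul]
      exact pow_le_pow_of_le_one (sq_nonneg _) hC2le (by omega)
    have hCband : 1/4 ≤ Cs t ^ (2*m) := by
      have := hpyth t
      rw [hgdef] at hb2
      simp only at hb2
      linarith
    have h1 : (1:ℝ)/2 ≤ Sn t ^ (n-1) := by
      rw [hgdef] at hb1; simp only at hb1; linarith
    have h2 : (1:ℝ)/4 ≤ Cs t ^ (m-1) := by linarith
    nlinarith
  -- gap between t₁ and t₂'
  have hgap : γ / (m:ℝ) ≤ t₂' - t₁ := by
    have hup : |Sn t₁| ≤ (1/2:ℝ) ^ ((1:ℝ)/(2*(n:ℝ))) := by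
      have := root_le (x := Sn t₁) (c := 1/2) hn ht₁mem.2
      convert this using 3 <;> push_cast <;> ring
    have hlo : (3/4:ℝ) ^ ((1:ℝ)/(2*(n:ℝ))) ≤ |Sn t₂'| := by
      have := root_ge (x := Sn t₂') (c := 3/4) hn (by norm_num) ht₂'mem.2
      convert this using 3 <;> push_cast <;> ring
    have hlip : |Sn t₂' - Sn t₁| ≤ (m:ℝ) * (t₂' - t₁) := by
      apply aux_lip Sn _ hSn ht₁lt.le
      intro x hx
      have h1 : |(m:ℝ) * Cs x ^ (2*m-1)| = (m:ℝ) * |Cs x| ^ (2*m-1) := by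
        rw [abs_mul, abs_pow, Nat.abs_cast]
      rw [h1]
      have h2 : |Cs x| ^ (2*m-1) ≤ 1 := pow_le_one₀ (abs_nonneg _) (hCabs x)
      nlinarith
    have htri : γ ≤ |Sn t₂' - Sn t₁| := by
      have := abs_sub_abs_le_abs_sub (Sn t₂') (Sn t₁)
      rw [hγdef]
      linarith
    rw [div_le_iff₀ hmR]
    nlinarith
  -- integral bounds
  set h : ℝ → ℝ := fun t => Sn t ^ (n-1) * Cs t ^ (m-1) with hhdef
  have hhcont : Continuous h := (hScont.pow _).mul (hCcont.pow _)
  have hhnonneg : ∀ t, 0 ≤ h t := by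
    intro t
    apply mul_nonneg
    · exact Even.pow_nonneg (Nat.Odd.sub_odd hnodd odd_one) _
    · exact Even.pow_nonneg (Nat.Odd.sub_odd hmodd odd_one) _
  have hIct : a ≤ t₁ := ht₀I.1.trans ht₁lb
  have hIct2 : t₂' ≤ a + 14 := by
    have h1 : t₂ ≤ t₀ + 9/(m:ℝ) := ht₂I.2
    have h2 : t₀ ≤ a + 5/(n:ℝ) := ht₀I.2
    have h3 : 9/(m:ℝ) ≤ 9 := by
      rw [div_le_iff₀ hmR]; nlinarith
    have h4 : 5/(n:ℝ) ≤ 5 := by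
      rw [div_le_iff₀ hnR]; nlinarith
    
    linarith
  have hint1 : γ/(8*(m:ℝ)) ≤ ∫ t in t₁..t₂', h t := by
    have hconst : ∫ t in t₁..t₂', (1:ℝ)/8 = (t₂' - t₁) * (1/8) := by
      rw [intervalIntegral.integral_const, smul_eq_mul]
    have hmono := intervalIntegral.integral_mono_on (μ := MeasureTheory.volume) ht₁lt.le
      (intervalIntegrable_const (c := (1:ℝ)/8)) (hhcont.intervalIntegrable t₁ t₂') hband_h
    rw [hconst] at hmono
    have : γ/(8*(m:ℝ)) ≤ (t₂' - t₁) * (1/8) := by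
      rw [div_le_iff₀ (by positivity)]
      have h5 : γ ≤ (t₂' - t₁) * (m:ℝ) := by
        rw [div_le_iff₀ hmR] at hgap
        linarith
      calc γ ≤ (t₂' - t₁) * (m:ℝ) := h5
        _ = (t₂' - t₁) * (1/8) * (8*(m:ℝ)) := by ring
    linarith
  have hsplit : ∫ t in a..(a+14), h t =
      (∫ t in a..t₁, h t) + (∫ t in t₁..t₂', h t) + (∫ t in t₂'..(a+14), h t) := by
    rw [intervalIntegral.integral_add_adjacent_intervals
        (hhcont.intervalIntegrable a t₁) (hhcont.intervalIntegrable t₁ t₂'),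
      intervalIntegral.integral_add_adjacent_intervals
        (hhcont.intervalIntegrable a t₂') (hhcont.intervalIntegrable t₂' (a+14))]
  have hpos1 : 0 ≤ ∫ t in a..t₁, h t :=
    intervalIntegral.integral_nonneg hIct (fun t _ => hhnonneg t)
  have hpos2 : 0 ≤ ∫ t in t₂'..(a+14), h t :=
    intervalIntegral.integral_nonneg hIct2 (fun t _ => hhnonneg t)
  calc γ/(8*(m:ℝ)) ≤ ∫ t in t₁..t₂', h t := hint1
    _ ≤ ∫ t in a..(a+14), h t := by rw [hsplit]; linarith


set_option maxHeartbeats 2000000 in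
lemma tail (K : ℕ) (hK : 0 < K) (w : ℝ → ℝ) (hwc : Continuous w)
    (hw0 : ∀ t, 0 ≤ w t) (hw1 : ∀ t, w t ≤ 1) {δ L : ℝ} (hδ : 0 < δ) (hL : 0 < L)
    (hwin : ∀ a : ℝ, δ ≤ ∫ t in a..(a+L), w t)
    (ρ : ℝ → ℝ) (t₀ : ℝ) (hρ : ∀ t, t₀ ≤ t → 0 < ρ t) (ε : ℝ) (hε : ε = 1 ∨ ε = -1)
    (hode : ∀ t, t₀ ≤ t → HasDerivAt ρ (ε * w t * ρ t ^ (K+1)) t)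
    (hlim : Filter.Tendsto ρ Filter.atTop (nhds 0)) :
    ∃ A B : ℝ, 0 < A ∧ A ≤ B ∧ ∀ t, t₀ ≤ t →
      A ≤ ρ t * (t - t₀ + 1) ^ ((1:ℝ)/K) ∧ ρ t * (t - t₀ + 1) ^ ((1:ℝ)/K) ≤ B := by
  obtain ⟨K', rfl⟩ : ∃ K', K = K' + 1 := ⟨K-1, by omega⟩
  set g : ℝ → ℝ := fun t => (ρ t ^ (K'+1))⁻¹ with hgdef
  have hg : ∀ t, t₀ ≤ t → HasDerivAt g (-(ε * (K'+1) * w t)) t := by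
    intro t ht
    have hρne : ρ t ≠ 0 := (hρ t ht).ne'
    have h1 := ((hode t ht).pow (K'+1)).inv (pow_ne_zero (K'+1) hρne)
    refine h1.congr_deriv ?_
    simp only [Nat.add_sub_cancel, Pi.pow_apply]
    field_simp
    push_cast
    ring
  have hgpos : ∀ t, t₀ ≤ t → 0 < g t := fun t ht =>
    inv_pos.2 (pow_pos (hρ t ht) _)
  have hftc : ∀ u v, t₀ ≤ u → u ≤ v →
      g v - g u = ∫ t in u..v, -(ε * (K'+1) * w t) := by
    intro u v hu huv
    refine (intervalIntegral.integral_eq_sub_of_hasDerivAt ?_ ?_).symm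
    · intro t htuv
      rw [uIcc_of_le huv] at htuv
      exact hg t (hu.trans htuv.1)
    · exact (Continuous.intervalIntegrable (by continuity) u v)
  rcases hε with hε | hε
  · -- ε = 1 : contradiction with ρ → 0
    exfalso
    have hdec : ∀ t, t₀ ≤ t → g t ≤ g t₀ := by
      intro t ht
      have := hftc t₀ t le_rfl ht
      have hnonpos : (∫ s in t₀..t, -(ε * (K'+1) * w s)) ≤ 0 := by
        rw [intervalIntegral.integral_neg, neg_nonpos]
        apply intervalIntegral.integral_nonneg ht
        intro s _
        rw [hε]
        have h0 := hw0 s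
        have h1 : (0:ℝ) ≤ (K':ℝ)+1 := by positivity
        nlinarith
      linarith
    have htop : Tendsto g atTop atTop := by
      have h1 : Tendsto (fun t => ρ t ^ (K'+1)) atTop (nhds 0) := by
        have := hlim.pow (K'+1)
        simpa [zero_pow (Nat.succ_ne_zero K')] using this
      have h2 : ∀ᶠ t in atTop, 0 < ρ t ^ (K'+1) := by
        filter_upwards [eventually_ge_atTop t₀] with t ht
        exact pow_pos (hρ t ht) _
      have h3 : Tendsto (fun t => ρ t ^ (K'+1)) atTop (nhdsWithin 0 (Ioi 0)) := by
        rw [tendsto_nhdsWithin_iff]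
        exact ⟨h1, h2⟩
      exact h3.inv_tendsto_nhdsGT_zero
    obtain ⟨t, ht1, ht2⟩ := ((htop.eventually_gt_atTop (g t₀)).and
      (eventually_ge_atTop t₀)).exists
    exact absurd (hdec t ht2) (not_le.2 ht1)
  · -- ε = -1
    have hKR : (0:ℝ) < (K'+1:ℝ) := by positivity
    have hFTC : ∀ t, t₀ ≤ t → g t - g t₀ = (K'+1:ℝ) * ∫ s in t₀..t, w s := by
      intro t ht
      rw [hftc t₀ t le_rfl ht]
      rw [← intervalIntegral.integral_const_mul]
      congr 1
      funext s
      rw [hε]; ring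
    -- window accumulation
    have hjint : ∀ j : ℕ, (j:ℝ)*δ ≤ ∫ s in t₀..(t₀ + j*L), w s := by
      intro j
      induction j with
      | zero => simp
      | succ j ih =>
        have hadj : ∫ s in t₀..(t₀ + (j+1:ℕ)*L), w s =
            (∫ s in t₀..(t₀ + j*L), w s) + ∫ s in (t₀ + j*L)..(t₀ + (j+1:ℕ)*L), w s := by
          rw [intervalIntegral.integral_add_adjacent_intervals
            (hwc.intervalIntegrable _ _) (hwc.intervalIntegrable _ _)]
        have hwin' : δ ≤ ∫ s in (t₀ + j*L)..(t₀ + (j+1:ℕ)*L), w s := by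
          have := hwin (t₀ + j*L)
          have he : t₀ + (j:ℝ)*L + L = t₀ + ((j+1:ℕ):ℝ)*L := by push_cast; ring
          rwa [he] at this
        rw [hadj]
        push_cast
        push_cast at ih hwin'
        linarith
    have hintlow : ∀ t, t₀ ≤ t → ((t - t₀)/L - 1)*δ ≤ ∫ s in t₀..t, w s := by
      intro t ht
      set j : ℕ := ⌊(t - t₀)/L⌋₊ with hjdef
      have hs0 : 0 ≤ (t - t₀)/L := div_nonneg (by linarith) hL.le
      have hj1 : (j:ℝ) ≤ (t - t₀)/L := Nat.floor_le hs0
      have hj2 : (t - t₀)/L < (j:ℝ) + 1 := Nat.lt_floor_add_one _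
      have hjt : t₀ + (j:ℝ)*L ≤ t := by
        have := (le_div_iff₀ hL).mp hj1
        linarith
      have hsplit : ∫ s in t₀..t, w s =
          (∫ s in t₀..(t₀ + j*L), w s) + ∫ s in (t₀ + j*L)..t, w s := by
        rw [intervalIntegral.integral_add_adjacent_intervals
          (hwc.intervalIntegrable _ _) (hwc.intervalIntegrable _ _)]
      have hpos2 : 0 ≤ ∫ s in (t₀ + j*L)..t, w s :=
        intervalIntegral.integral_nonneg hjt (fun s _ => hw0 s)
      have h1 := hjint j
      have h2 : ((t - t₀)/L - 1)*δ ≤ (j:ℝ)*δ := by nlinarith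
      rw [hsplit]
      linarith
    have hintup : ∀ t, t₀ ≤ t → (∫ s in t₀..t, w s) ≤ t - t₀ := by
      intro t ht
      have := intervalIntegral.integral_mono_on (μ := MeasureTheory.volume) ht
        (hwc.intervalIntegrable _ _) (intervalIntegrable_const (c := (1:ℝ)))
        (fun s _ => hw1 s)
      simpa using this
    -- bounds on g
    set C₂ : ℝ := g t₀ + (K'+1:ℝ) with hC₂def
    have hgt₀pos : 0 < g t₀ := hgpos t₀ le_rfl
    have hC₂pos : 0 < C₂ := by rw [hC₂def]; positivity
    have hgup : ∀ t, t₀ ≤ t → g t ≤ C₂ * (t - t₀ + 1) := by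
      intro t ht
      have h1 := hFTC t ht
      have h2 := hintup t ht
      have h3 : g t ≤ g t₀ + (K'+1:ℝ)*(t - t₀) := by nlinarith
      rw [hC₂def]
      nlinarith [ht]
    set c₁ : ℝ := min (g t₀/(2*L+2)) ((K'+1:ℝ)*δ/(2*L)) with hc₁def
    have hc₁pos : 0 < c₁ := by
      rw [hc₁def]
      apply lt_min <;> positivity
    have hgmono : ∀ t, t₀ ≤ t → g t₀ ≤ g t := by
      intro t ht
      have h1 := hFTC t ht
      have h2 : 0 ≤ ∫ s in t₀..t, w s :=
        intervalIntegral.integral_nonneg ht (fun s _ => hw0 s)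
      nlinarith
    have hglow : ∀ t, t₀ ≤ t → c₁ * (t - t₀ + 1) ≤ g t := by
      intro t ht
      have hs0 : 0 ≤ t - t₀ := by linarith
      rcases le_or_gt (t - t₀) (2*L+1) with hcase | hcase
      · have h1 : c₁ ≤ g t₀/(2*L+2) := min_le_left _ _
        have h2 := hgmono t ht
        have h3 : c₁ * (t - t₀ + 1) ≤ (g t₀/(2*L+2)) * (2*L+2) := by
          apply mul_le_mul h1 (by linarith) (by linarith) (le_of_lt (by positivity))
        have h4 : (g t₀/(2*L+2)) * (2*L+2) = g t₀ := by field_simp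
        rw [h4] at h3
        linarith
      · have h1 := hFTC t ht
        have h2 := hintlow t ht
        have h3 : c₁ ≤ (K'+1:ℝ)*δ/(2*L) := min_le_right _ _
        have h5 : (K'+1:ℝ)*(((t - t₀)/L - 1)*δ) ≤ g t - g t₀ := by
          rw [h1]
          have := mul_le_mul_of_nonneg_left h2 (le_of_lt hKR)
          linarith
        have h6 : ((K'+1:ℝ)*δ/(2*L)) * (t - t₀ + 1) ≤ (K'+1:ℝ)*(((t - t₀)/L-1)*δ) := by
          rw [div_mul_eq_mul_div, div_le_iff₀ (by positivity)]
          have expand : (K'+1:ℝ)*(((t - t₀)/L-1)*δ) * (2*L) = (K'+1:ℝ)*δ*(2*(t - t₀) - 2*L) := by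
            field_simp
          rw [expand]
          nlinarith [mul_pos hKR hδ]
        have h7 : c₁*(t - t₀ + 1) ≤ ((K'+1:ℝ)*δ/(2*L))*(t - t₀ + 1) :=
          mul_le_mul_of_nonneg_right h3 (by linarith)
        nlinarith [hgt₀pos]
    -- convert to ρ bounds
    refine ⟨(1/C₂) ^ ((1:ℝ)/(K'+1:ℕ)), (1/c₁) ^ ((1:ℝ)/(K'+1:ℕ)), ?_, ?_, ?_⟩
    · positivity
    · apply Real.rpow_le_rpow (by positivity) _ (by positivity)
      have hc₁C₂ : c₁ ≤ C₂ := by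
        have h1 : c₁ ≤ g t₀/(2*L+2) := min_le_left _ _
        have h2 : g t₀/(2*L+2) ≤ g t₀ := by
          rw [div_le_iff₀ (by linarith)]
          nlinarith
        rw [hC₂def]
        linarith
      apply one_div_le_one_div_of_le hc₁pos hc₁C₂
    · intro t ht
      have hs0 : 0 ≤ t - t₀ := by linarith
      have hs1 : (0:ℝ) < t - t₀ + 1 := by linarith
      have hρt := hρ t ht
      have hgt := hgpos t ht
      have hup := hgup t ht
      have hlow := hglow t ht
      -- ρ t = (g t)⁻¹ ^ (1/(K'+1))
      have hρeq : ρ t = (g t)⁻¹ ^ ((1:ℝ)/(K'+1:ℕ)) := by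
        rw [hgdef]
        simp only [inv_inv]
        rw [← Real.rpow_natCast (ρ t) (K'+1), ← Real.rpow_mul (le_of_lt hρt)]
        rw [show ((K'+1:ℕ):ℝ) * ((1:ℝ)/(K'+1:ℕ)) = 1 by
          field_simp]
        rw [Real.rpow_one]
      have hprod : ρ t * (t - t₀ + 1) ^ ((1:ℝ)/(K'+1:ℕ)) = ((t - t₀ + 1)/g t) ^ ((1:ℝ)/(K'+1:ℕ)) := by
        rw [hρeq, ← Real.mul_rpow (by positivity) (by linarith)]
        congr 1
        field_simp
      constructor
      · rw [hprod]
        apply Real.rpow_le_rpow (by positivity) _ (by positivity)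
        rw [div_le_div_iff₀ hC₂pos hgt]
        calc 1 * g t ≤ C₂ * (t - t₀ + 1) := by rw [one_mul]; exact hup
          _ = (t - t₀ + 1) * C₂ := by ring
      · rw [hprod]
        apply Real.rpow_le_rpow (by positivity) _ (by positivity)
        rw [div_le_div_iff₀ (by positivity) hc₁pos]
        calc (t - t₀ + 1) * c₁ = c₁ * (t - t₀ + 1) := by ring
          _ ≤ g t := hlow
          _ = 1 * g t := by ring


lemma convert_bounds {α φ₁ A₀ B₀ r φ : ℝ} (hα : 0 ≤ α)
    (hA₀ : 0 < A₀) (hr : 0 ≤ r) (hφ : 1 ≤ |φ|)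
    (h1 : A₀ ≤ r * (|φ - φ₁| + 1) ^ α) (h2 : r * (|φ - φ₁| + 1) ^ α ≤ B₀) :
    A₀ / (2+|φ₁|)^α ≤ r * |φ|^α ∧ r * |φ|^α ≤ B₀ * (1+|φ₁|)^α := by
  have hu : 0 ≤ |φ - φ₁| := abs_nonneg _
  have hφ₁ : 0 ≤ |φ₁| := abs_nonneg _
  have habs1 : |φ| - |φ₁| ≤ |φ - φ₁| := abs_sub_abs_le_abs_sub φ φ₁
  have habs2 : |φ - φ₁| ≤ |φ| + |φ₁| := abs_sub _ _
  have key1 : |φ| ≤ (|φ - φ₁| + 1) * (1 + |φ₁|) := by nlinarith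
  have key2 : |φ - φ₁| + 1 ≤ |φ| * (2 + |φ₁|) := by nlinarith
  have hb1 : (0:ℝ) < (2+|φ₁|)^α := Real.rpow_pos_of_pos (by linarith) _
  have hb2 : (0:ℝ) ≤ (1+|φ₁|)^α := (Real.rpow_pos_of_pos (by linarith) _).le
  constructor
  · -- lower bound
    have hmono : (|φ - φ₁| + 1) ^ α ≤ (|φ| * (2+|φ₁|)) ^ α :=
      Real.rpow_le_rpow (by linarith) key2 hα
    have hsplit : (|φ| * (2+|φ₁|)) ^ α = |φ|^α * (2+|φ₁|)^α :=
      Real.mul_rpow (abs_nonneg _) (by linarith)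
    rw [hsplit] at hmono
    have h3 : A₀ ≤ r * (|φ|^α * (2+|φ₁|)^α) :=
      h1.trans (mul_le_mul_of_nonneg_left hmono hr)
    rw [div_le_iff₀ hb1]
    calc A₀ ≤ r * (|φ|^α * (2+|φ₁|)^α) := h3
      _ = r * |φ|^α * (2+|φ₁|)^α := by ring
  · have hmono : |φ|^α ≤ ((|φ - φ₁| + 1) * (1+|φ₁|)) ^ α :=
      Real.rpow_le_rpow (abs_nonneg _) key1 hα
    have hsplit : ((|φ - φ₁| + 1) * (1+|φ₁|)) ^ α = (|φ - φ₁| + 1)^α * (1+|φ₁|)^α :=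
      Real.mul_rpow (by linarith) (by linarith)
    rw [hsplit] at hmono
    calc r * |φ|^α ≤ r * ((|φ - φ₁| + 1)^α * (1+|φ₁|)^α) :=
        mul_le_mul_of_nonneg_left hmono hr
      _ = (r * (|φ - φ₁| + 1)^α) * (1+|φ₁|)^α := by ring
      _ ≤ B₀ * (1+|φ₁|)^α := mul_le_mul_of_nonneg_right h2 hb2

end SpiralAux

/-- Degenerate focus system with `m ≠ n` odd, `m + n > 2`, in
`(n,m)`-polar coordinates, reducing to `dr/dφ = ± Sn^{n-1}(φ) Cs^{m-1}(φ) r^{2mnk+1}`: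
if `k > 0`, a spiral trajectory `S` near the origin is comparable (in the
`(n,m)`-polar radius) with the power spiral `r = φ^{-1/(2mnk)}`. -/
theorem stmt10 (m n : ℕ) (hmodd : Odd m) (hnodd : Odd n) (hmn : 2 < m + n)
    (hne : m ≠ n) (k : ℕ) (hk : 0 < k)
    (σ : ℝ) (hσ : σ = 1 ∨ σ = -1)
    (Cs Sn : ℝ → ℝ)
    (hCs : ∀ φ : ℝ, HasDerivAt Cs (-(n : ℝ) * (Sn φ) ^ (2 * n - 1)) φ)
    (hSn : ∀ φ : ℝ, HasDerivAt Sn ((m : ℝ) * (Cs φ) ^ (2 * m - 1)) φ)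
    (hCs0 : Cs 0 = 1) (hSn0 : Sn 0 = 0)
    (ρ : ℝ → ℝ) (φ₁ : ℝ) (D : Set ℝ)
    (hρpos : ∀ φ ∈ D, 0 < ρ φ)
    (hD : (D = Set.Ici φ₁ ∧ Filter.Tendsto ρ Filter.atTop (nhds 0)) ∨
          (D = Set.Iic φ₁ ∧ Filter.Tendsto ρ Filter.atBot (nhds 0)))
    (hode : ∀ φ ∈ D, HasDerivAt ρ
      (σ * (Sn φ) ^ (n - 1) * (Cs φ) ^ (m - 1) * (ρ φ) ^ (2 * m * n * k + 1)) φ)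
    (S : Set E2)
    (hS : S = (fun φ => pt2 ((ρ φ) ^ n * Cs φ) ((ρ φ) ^ m * Sn φ)) '' D) :
    ∃ A B : ℝ, 0 < A ∧ A ≤ B ∧ ∀ φ ∈ D, 1 ≤ |φ| →
      A ≤ ρ φ * |φ| ^ ((1 : ℝ) / (2 * m * n * k)) ∧
        ρ φ * |φ| ^ ((1 : ℝ) / (2 * m * n * k)) ≤ B := by
  have hm : 1 ≤ m := hmodd.pos
  have hn : 1 ≤ n := hnodd.pos
  have hmR : (0:ℝ) < m := by exact_mod_cast hm
  have hnR : (0:ℝ) < n := by exact_mod_cast hn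
  have hpyth : ∀ φ : ℝ, Cs φ ^ (2*m) + Sn φ ^ (2*n) = 1 :=
    pyth m n Cs Sn hm hn hCs hSn hCs0 hSn0
  have hCabs : ∀ φ, |Cs φ| ≤ 1 := habs hm Sn hpyth
  have hSabs : ∀ φ, |Sn φ| ≤ 1 := habs hn Cs (fun φ => by rw [add_comm]; exact hpyth φ)
  have hdS : Differentiable ℝ Sn := fun x => (hSn x).differentiableAt
  have hdC : Differentiable ℝ Cs := fun x => (hCs x).differentiableAt
  set K : ℕ := 2*m*n*k with hKdef
  have hK : 0 < K := by
    have h1 : 0 < 2*m*n := Nat.mul_pos (Nat.mul_pos (by norm_num) hm) hn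
    exact Nat.mul_pos h1 hk
  have hKcast : ((K:ℕ):ℝ) = 2*(m:ℝ)*(n:ℝ)*(k:ℝ) := by rw [hKdef]; push_cast; ring
  set w : ℝ → ℝ := fun t => Sn t ^ (n-1) * Cs t ^ (m-1) with hwdef
  have hwc : Continuous w := (hdS.continuous.pow _).mul (hdC.continuous.pow _)
  have hw0 : ∀ t, 0 ≤ w t := by
    intro t
    apply mul_nonneg
    · exact Even.pow_nonneg (Nat.Odd.sub_odd hnodd odd_one) _
    · exact Even.pow_nonneg (Nat.Odd.sub_odd hmodd odd_one) _
  have hw1 : ∀ t, w t ≤ 1 := by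
    intro t
    have e1 : Sn t ^ (n-1) = |Sn t| ^ (n-1) := by
      rw [← abs_pow, abs_of_nonneg (Even.pow_nonneg (Nat.Odd.sub_odd hnodd odd_one) _)]
    have e2 : Cs t ^ (m-1) = |Cs t| ^ (m-1) := by
      rw [← abs_pow, abs_of_nonneg (Even.pow_nonneg (Nat.Odd.sub_odd hmodd odd_one) _)]
    rw [hwdef]
    simp only
    rw [e1, e2]
    have h1 : |Sn t| ^ (n-1) ≤ 1 := pow_le_one₀ (abs_nonneg _) (hSabs t)
    have h2 : |Cs t| ^ (m-1) ≤ 1 := pow_le_one₀ (abs_nonneg _) (hCabs t)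
    nlinarith [pow_nonneg (abs_nonneg (Sn t)) (n-1), pow_nonneg (abs_nonneg (Cs t)) (m-1)]
  set δ : ℝ := ((3/4:ℝ) ^ ((1:ℝ)/(2*(n:ℝ))) - (1/2:ℝ) ^ ((1:ℝ)/(2*(n:ℝ)))) / (8*(m:ℝ)) with hδdef
  have hδpos : 0 < δ := by
    rw [hδdef]
    have := Real.rpow_lt_rpow (by norm_num : (0:ℝ) ≤ 1/2)
      (by norm_num : (1/2:ℝ) < 3/4) (by positivity : (0:ℝ) < 1/(2*(n:ℝ)))
    have h2 : (0:ℝ) < 8*(m:ℝ) := by positivity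
    apply div_pos (by linarith) h2
  have hwin : ∀ a : ℝ, δ ≤ ∫ t in a..(a+(14:ℝ)), w t := fun a =>
    window hmodd hnodd hCs hSn hpyth a
  have hL : (0:ℝ) < 14 := by norm_num
  have hα : (0:ℝ) ≤ (1:ℝ)/(2*(m:ℝ)*(n:ℝ)*(k:ℝ)) := by positivity
  have hexp : ((1:ℝ)/(K:ℝ)) = (1:ℝ)/(2*(m:ℝ)*(n:ℝ)*(k:ℝ)) := by rw [hKcast]
  rcases hD with ⟨hDeq, hlim⟩ | ⟨hDeq, hlim⟩
  · -- forward case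
    subst hDeq
    obtain ⟨A₀, B₀, hA₀, hAB₀, hbnd⟩ := tail K hK w hwc hw0 hw1 hδpos hL hwin ρ φ₁
      (fun t ht => hρpos t ht) σ hσ
      (fun t ht => by
        have := hode t ht
        convert this using 1
        rw [hwdef]
        simp only
        ring) hlim
    have h2φ : (1:ℝ) ≤ 2 + |φ₁| := by have := abs_nonneg φ₁; linarith
    have h1φ : (1:ℝ) ≤ 1 + |φ₁| := by have := abs_nonneg φ₁; linarith
    have hp2 : (0:ℝ) < (2+|φ₁|) ^ ((1:ℝ)/(2*(m:ℝ)*(n:ℝ)*(k:ℝ))) :=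
      Real.rpow_pos_of_pos (by linarith) _
    have hge2 : (1:ℝ) ≤ (2+|φ₁|) ^ ((1:ℝ)/(2*(m:ℝ)*(n:ℝ)*(k:ℝ))) :=
      Real.one_le_rpow h2φ hα
    have hge1 : (1:ℝ) ≤ (1+|φ₁|) ^ ((1:ℝ)/(2*(m:ℝ)*(n:ℝ)*(k:ℝ))) :=
      Real.one_le_rpow h1φ hα
    refine ⟨A₀ / (2+|φ₁|) ^ ((1:ℝ)/(2*(m:ℝ)*(n:ℝ)*(k:ℝ))),
      B₀ * (1+|φ₁|) ^ ((1:ℝ)/(2*(m:ℝ)*(n:ℝ)*(k:ℝ))), div_pos hA₀ hp2, ?_, ?_⟩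
    · calc A₀ / (2+|φ₁|) ^ ((1:ℝ)/(2*(m:ℝ)*(n:ℝ)*(k:ℝ))) ≤ A₀ :=
          div_le_self hA₀.le hge2
        _ ≤ B₀ := hAB₀
        _ ≤ B₀ * (1+|φ₁|) ^ ((1:ℝ)/(2*(m:ℝ)*(n:ℝ)*(k:ℝ))) :=
          le_mul_of_one_le_right (hA₀.trans_le hAB₀).le hge1
    · intro φ hφD hφ1
      have hin : φ₁ ≤ φ := hφD
      obtain ⟨hb1, hb2⟩ := hbnd φ hin
      rw [hexp] at hb1 hb2
      have habsu : |φ - φ₁| = φ - φ₁ := abs_of_nonneg (by linarith)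
      rw [← habsu] at hb1 hb2
      exact convert_bounds hα hA₀ (hρpos φ hφD).le hφ1 hb1 hb2
  · -- backward case
    subst hDeq
    set ρ2 : ℝ → ℝ := fun t => ρ (2*φ₁ - t) with hρ2def
    set w2 : ℝ → ℝ := fun t => w (2*φ₁ - t) with hw2def
    have hw2c : Continuous w2 := hwc.comp (by continuity)
    have hw2win : ∀ a : ℝ, δ ≤ ∫ t in a..(a+(14:ℝ)), w2 t := by
      intro a
      have h := hwin (2*φ₁ - (a+14))
      have e1 : 2*φ₁ - (a+14) + 14 = 2*φ₁ - a := by ring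
      rw [e1] at h
      rw [hw2def]
      simp only
      rw [intervalIntegral.integral_comp_sub_left w (2*φ₁)]
      exact h
    have hρ2pos : ∀ t, φ₁ ≤ t → 0 < ρ2 t := by
      intro t ht
      exact hρpos _ (by simp only [Set.mem_Iic]; linarith)
    have hode2 : ∀ t, φ₁ ≤ t → HasDerivAt ρ2 ((-σ) * w2 t * ρ2 t ^ (K+1)) t := by
      intro t ht
      have hmem : (2*φ₁ - t) ∈ Set.Iic φ₁ := by simp only [Set.mem_Iic]; linarith
      have hinner : HasDerivAt (fun s : ℝ => 2*φ₁ - s) (-1) t := by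
        simpa [Pi.sub_def] using (hasDerivAt_const t (2*φ₁)).sub (hasDerivAt_id t)
      have hcomp := HasDerivAt.comp t (hode _ hmem) hinner
      have : HasDerivAt ρ2
          ((σ * Sn (2*φ₁-t) ^ (n-1) * Cs (2*φ₁-t) ^ (m-1) * ρ (2*φ₁-t) ^ (2*m*n*k+1)) * (-1)) t := by
        exact hcomp
      convert this using 1
      rw [hw2def, hρ2def, hwdef]
      simp only
      ring
    have hlim2 : Filter.Tendsto ρ2 Filter.atTop (nhds 0) := by
      have hneg : Filter.Tendsto (fun t : ℝ => 2*φ₁ - t) Filter.atTop Filter.atBot := by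
        have h1 := Filter.tendsto_atBot_add_const_left Filter.atTop (2*φ₁)
          (tendsto_neg_atTop_atBot : Filter.Tendsto (fun x : ℝ => -x) Filter.atTop Filter.atBot)
        simpa [sub_eq_add_neg] using h1
      exact hlim.comp hneg
    obtain ⟨A₀, B₀, hA₀, hAB₀, hbnd⟩ := tail K hK w2 hw2c (fun t => hw0 _) (fun t => hw1 _)
      hδpos hL hw2win ρ2 φ₁ hρ2pos (-σ)
      (by
        rcases hσ with h | h
        · exact Or.inr (by rw [h])
        · exact Or.inl (by rw [h]; norm_num))
      hode2 hlim2
    have h2φ : (1:ℝ) ≤ 2 + |φ₁| := by have := abs_nonneg φ₁; linarith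
    have h1φ : (1:ℝ) ≤ 1 + |φ₁| := by have := abs_nonneg φ₁; linarith
    have hp2 : (0:ℝ) < (2+|φ₁|) ^ ((1:ℝ)/(2*(m:ℝ)*(n:ℝ)*(k:ℝ))) :=
      Real.rpow_pos_of_pos (by linarith) _
    have hge2 : (1:ℝ) ≤ (2+|φ₁|) ^ ((1:ℝ)/(2*(m:ℝ)*(n:ℝ)*(k:ℝ))) :=
      Real.one_le_rpow h2φ hα
    have hge1 : (1:ℝ) ≤ (1+|φ₁|) ^ ((1:ℝ)/(2*(m:ℝ)*(n:ℝ)*(k:ℝ))) :=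
      Real.one_le_rpow h1φ hα
    refine ⟨A₀ / (2+|φ₁|) ^ ((1:ℝ)/(2*(m:ℝ)*(n:ℝ)*(k:ℝ))),
      B₀ * (1+|φ₁|) ^ ((1:ℝ)/(2*(m:ℝ)*(n:ℝ)*(k:ℝ))), div_pos hA₀ hp2, ?_, ?_⟩
    · calc A₀ / (2+|φ₁|) ^ ((1:ℝ)/(2*(m:ℝ)*(n:ℝ)*(k:ℝ))) ≤ A₀ :=
          div_le_self hA₀.le hge2
        _ ≤ B₀ := hAB₀
        _ ≤ B₀ * (1+|φ₁|) ^ ((1:ℝ)/(2*(m:ℝ)*(n:ℝ)*(k:ℝ))) :=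
          le_mul_of_one_le_right (hA₀.trans_le hAB₀).le hge1
    · intro φ hφD hφ1
      have hin : φ ≤ φ₁ := hφD
      have ht : φ₁ ≤ 2*φ₁ - φ := by linarith
      obtain ⟨hb1, hb2⟩ := hbnd (2*φ₁ - φ) ht
      rw [hexp] at hb1 hb2
      rw [hρ2def] at hb1 hb2
      simp only at hb1 hb2
      have e2 : 2*φ₁ - (2*φ₁ - φ) = φ := by ring
      rw [e2] at hb1 hb2
      have e3 : |φ - φ₁| = 2*φ₁ - φ - φ₁ := by
        rw [abs_of_nonpos (by linarith)]; ring
      rw [← e3] at hb1 hb2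
      exact convert_bounds hα hA₀ (hρpos φ hφD).le hφ1 hb1 hb2
end

section
/- Let m, n be positive integers and let Cs, Sn : ℝ → ℝ be the (unique, globally defined) solutions of the system d Cs/dφ = −n Sn^{2n−1}(φ), d Sn/dφ = m Cs^{2m−1}(φ) with initial condition (Cs(0), Sn(0)) = (1,0). Then Cs^{2m}(φ) + Sn^{2n}(φ) = 1 for all φ, Cs is even, Sn is odd, and both functions are periodic with period T = (2/(mn))·Γ(1/(2m))Γ(1/(2n))/Γ(1/(2m)+1/(2n)), where Γ is the gamma function. -/
open MeasureTheory Filter Metric Set Topology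

section Aux

lemma abs_pow_sub_pow_le' {x y : ℝ} (hx : |x| ≤ 1) (hy : |y| ≤ 1) (k : ℕ) :
    |x ^ k - y ^ k| ≤ k * |x - y| := by
  induction k with
  | zero => simp
  | succ k ih =>
    have e : x ^ (k+1) - y ^ (k+1) = x * (x ^ k - y ^ k) + (x - y) * y ^ k := by ring
    have h1 : |x| * |x ^ k - y ^ k| ≤ 1 * (k * |x - y|) :=
      mul_le_mul hx ih (abs_nonneg _) zero_le_one
    have h2 : |x - y| * |y| ^ k ≤ |x - y| * 1 :=
      mul_le_mul_of_nonneg_left (pow_le_one₀ (abs_nonneg _) hy) (abs_nonneg _)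
    calc |x ^ (k+1) - y ^ (k+1)| ≤ |x * (x ^ k - y ^ k)| + |(x - y) * y ^ k| := by
          rw [e]; exact abs_add_le _ _
      _ = |x| * |x ^ k - y ^ k| + |x - y| * |y| ^ k := by rw [abs_mul, abs_mul, abs_pow]
      _ ≤ 1 * (k * |x - y|) + |x - y| * 1 := add_le_add h1 h2
      _ = (↑(k + 1) : ℝ) * |x - y| := by push_cast; ring

lemma beta_eq_on_Icc {a b : ℝ} (x : ℝ) (hx : x ∈ Icc (0:ℝ) 1) :
    ((x ^ (a-1) * (1-x) ^ (b-1) : ℝ) : ℂ) = (x:ℂ) ^ ((a:ℂ)-1) * ((1:ℂ)-x) ^ ((b:ℂ)-1) := by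
  have h1 : ((x ^ (a-1) : ℝ) : ℂ) = (x:ℂ) ^ ((a:ℂ)-1) := by
    rw [Complex.ofReal_cpow hx.1]; push_cast; ring_nf
  have h2 : (((1-x) ^ (b-1) : ℝ) : ℂ) = ((1:ℂ)-x) ^ ((b:ℂ)-1) := by
    rw [Complex.ofReal_cpow (by linarith [hx.2])]; push_cast; ring_nf
  push_cast [← h1, ← h2]
  ring

lemma real_beta_integrable {a b : ℝ} (ha : 0 < a) (hb : 0 < b) :
    IntervalIntegrable (fun t : ℝ => t ^ (a-1) * (1-t) ^ (b-1)) volume 0 1 := by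
  have hC := Complex.betaIntegral_convergent (u := (a:ℂ)) (v := (b:ℂ)) (by simpa) (by simpa)
  have hN := hC.norm
  refine hN.congr ?_
  rw [Set.uIoc_of_le (by norm_num : (0:ℝ) ≤ 1)]
  intro x hx
  have hx' : x ∈ Icc (0:ℝ) 1 := Ioc_subset_Icc_self hx
  have := beta_eq_on_Icc (a := a) (b := b) x hx'
  calc ‖(x:ℂ) ^ ((a:ℂ)-1) * ((1:ℂ)-x) ^ ((b:ℂ)-1)‖
      = ‖((x ^ (a-1) * (1-x) ^ (b-1) : ℝ) : ℂ)‖ := by rw [this]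
    _ = |x ^ (a-1) * (1-x) ^ (b-1)| := Complex.norm_real _
    _ = x ^ (a-1) * (1-x) ^ (b-1) := abs_of_nonneg
        (mul_nonneg (Real.rpow_nonneg hx'.1 _) (Real.rpow_nonneg (by linarith [hx'.2]) _))

lemma real_beta_value {a b : ℝ} (ha : 0 < a) (hb : 0 < b) :
    ∫ t in (0:ℝ)..1, t ^ (a-1) * (1-t) ^ (b-1)
      = Real.Gamma a * Real.Gamma b / Real.Gamma (a+b) := by
  have hC := Complex.Gamma_mul_Gamma_eq_betaIntegral (s := (a:ℂ)) (t := (b:ℂ))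
    (by simpa) (by simpa)
  have hbeta : Complex.betaIntegral (a:ℂ) (b:ℂ)
      = ((∫ t in (0:ℝ)..1, t ^ (a-1) * (1-t) ^ (b-1) : ℝ) : ℂ) := by
    rw [Complex.betaIntegral, ← intervalIntegral.integral_ofReal]
    refine intervalIntegral.integral_congr fun x hx => ?_
    rw [Set.uIcc_of_le (by norm_num : (0:ℝ) ≤ 1)] at hx
    exact (beta_eq_on_Icc x hx).symm
  rw [hbeta, ← Complex.ofReal_add, Complex.Gamma_ofReal, Complex.Gamma_ofReal,
    Complex.Gamma_ofReal, ← Complex.ofReal_mul, ← Complex.ofReal_mul] at hC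
  have h := Complex.ofReal_injective hC
  have hG : Real.Gamma (a+b) ≠ 0 := (Real.Gamma_pos_of_pos (by linarith)).ne'
  field_simp
  linarith [h]

lemma ode_unique_global {v : ℝ × ℝ → ℝ × ℝ} {K : NNReal}
    (hv : LipschitzOnWith K v (closedBall 0 1)) {f g : ℝ → ℝ × ℝ}
    (hf : ∀ t, HasDerivAt f (v (f t)) t) (hfm : ∀ t, f t ∈ closedBall (0 : ℝ × ℝ) 1)
    (hg : ∀ t, HasDerivAt g (v (g t)) t) (hgm : ∀ t, g t ∈ closedBall (0 : ℝ × ℝ) 1)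
    {t₀ : ℝ} (heq : f t₀ = g t₀) : ∀ t, f t = g t := by
  intro t
  have h := ODE_solution_unique_of_mem_Ioo (v := fun _ => v)
    (s := fun _ => closedBall (0 : ℝ × ℝ) 1) (K := K) (fun _ _ => hv)
    (t₀ := t₀) (a := min t t₀ - 1) (b := max t t₀ + 1)
    ⟨by have := min_le_right t t₀; linarith, by have := le_max_right t t₀; linarith⟩
    (fun s _ => ⟨hf s, hfm s⟩) (fun s _ => ⟨hg s, hgm s⟩) heq
  exact h ⟨by have := min_le_left t t₀; linarith, by have := le_max_left t t₀; linarith⟩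

lemma vfield_lip (m n : ℕ) :
    LipschitzOnWith ((m * (2*m) + n * (2*n) : ℕ) : NNReal)
      (fun p : ℝ × ℝ => (-(n:ℝ) * p.2 ^ (2*n-1), (m:ℝ) * p.1 ^ (2*m-1)))
      (closedBall (0 : ℝ × ℝ) 1) := by
  refine LipschitzOnWith.of_dist_le_mul fun p hp q hq => ?_
  have hp1 : |p.1| ≤ 1 := by
    have := norm_fst_le p
    rw [mem_closedBall_zero_iff] at hp
    simpa [Real.norm_eq_abs] using this.trans hp
  have hp2 : |p.2| ≤ 1 := by
    have := norm_snd_le p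
    rw [mem_closedBall_zero_iff] at hp
    simpa [Real.norm_eq_abs] using this.trans hp
  have hq1 : |q.1| ≤ 1 := by
    have := norm_fst_le q
    rw [mem_closedBall_zero_iff] at hq
    simpa [Real.norm_eq_abs] using this.trans hq
  have hq2 : |q.2| ≤ 1 := by
    have := norm_snd_le q
    rw [mem_closedBall_zero_iff] at hq
    simpa [Real.norm_eq_abs] using this.trans hq
  have hd1 : dist p.1 q.1 ≤ dist p q := by rw [Prod.dist_eq]; exact le_max_left _ _
  have hd2 : dist p.2 q.2 ≤ dist p q := by rw [Prod.dist_eq]; exact le_max_right _ _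
  have hdn : (0:ℝ) ≤ dist p q := dist_nonneg
  rw [Prod.dist_eq]
  have e1 : dist (-(n:ℝ) * p.2 ^ (2*n-1)) (-(n:ℝ) * q.2 ^ (2*n-1))
      ≤ (n * (2*n) : ℕ) * dist p q := by
    rw [Real.dist_eq, show -(n:ℝ) * p.2 ^ (2*n-1) - -(n:ℝ) * q.2 ^ (2*n-1)
      = -(n:ℝ) * (p.2 ^ (2*n-1) - q.2 ^ (2*n-1)) by ring, abs_mul, abs_neg, Nat.abs_cast]
    calc (n:ℝ) * |p.2 ^ (2*n-1) - q.2 ^ (2*n-1)|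
        ≤ (n:ℝ) * ((2*n-1 : ℕ) * |p.2 - q.2|) := by
          exact mul_le_mul_of_nonneg_left (abs_pow_sub_pow_le' hp2 hq2 _) (Nat.cast_nonneg n)
      _ ≤ (n:ℝ) * ((2*n : ℕ) * dist p q) := by
          refine mul_le_mul_of_nonneg_left ?_ (Nat.cast_nonneg n)
          refine mul_le_mul (Nat.cast_le.mpr (Nat.sub_le _ _)) ?_
            (abs_nonneg _) (Nat.cast_nonneg _)
          rw [← Real.dist_eq]; exact hd2
      _ = (n * (2*n) : ℕ) * dist p q := by push_cast; ring
  have e2 : dist ((m:ℝ) * p.1 ^ (2*m-1)) ((m:ℝ) * q.1 ^ (2*m-1))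
      ≤ (m * (2*m) : ℕ) * dist p q := by
    rw [Real.dist_eq, show (m:ℝ) * p.1 ^ (2*m-1) - (m:ℝ) * q.1 ^ (2*m-1)
      = (m:ℝ) * (p.1 ^ (2*m-1) - q.1 ^ (2*m-1)) by ring, abs_mul, Nat.abs_cast]
    calc (m:ℝ) * |p.1 ^ (2*m-1) - q.1 ^ (2*m-1)|
        ≤ (m:ℝ) * ((2*m-1 : ℕ) * |p.1 - q.1|) := by
          exact mul_le_mul_of_nonneg_left (abs_pow_sub_pow_le' hp1 hq1 _) (Nat.cast_nonneg m)
      _ ≤ (m:ℝ) * ((2*m : ℕ) * dist p q) := by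
          refine mul_le_mul_of_nonneg_left ?_ (Nat.cast_nonneg m)
          refine mul_le_mul (Nat.cast_le.mpr (Nat.sub_le _ _)) ?_
            (abs_nonneg _) (Nat.cast_nonneg _)
          rw [← Real.dist_eq]; exact hd1
      _ = (m * (2*m) : ℕ) * dist p q := by push_cast; ring
  have hK : (((m * (2*m) + n * (2*n) : ℕ) : NNReal) : ℝ) * (dist p q)
      = ((m * (2*m) + n * (2*n) : ℕ) : ℝ) * dist p q := by
    push_cast; ring
  rw [hK]
  refine max_le (e1.trans ?_) (e2.trans ?_)
  · exact mul_le_mul_of_nonneg_right (Nat.cast_le.mpr (Nat.le_add_left _ _)) hdn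
  · exact mul_le_mul_of_nonneg_right (Nat.cast_le.mpr (Nat.le_add_right _ _)) hdn

end Aux


/-- The generalized trigonometric functions `Cs`, `Sn` solving
`Cs' = -n Sn^{2n-1}`, `Sn' = m Cs^{2m-1}`, `(Cs(0), Sn(0)) = (1,0)` satisfy
`Cs^{2m} + Sn^{2n} = 1`, `Cs` even, `Sn` odd, and both are `T`-periodic with
`T = (2/(mn))·Γ(1/(2m))Γ(1/(2n))/Γ(1/(2m)+1/(2n))`. -/
theorem stmt11 (m n : ℕ) (hm : 1 ≤ m) (hn : 1 ≤ n)
    (Cs Sn : ℝ → ℝ)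
    (hCs : ∀ φ : ℝ, HasDerivAt Cs (-(n : ℝ) * (Sn φ) ^ (2 * n - 1)) φ)
    (hSn : ∀ φ : ℝ, HasDerivAt Sn ((m : ℝ) * (Cs φ) ^ (2 * m - 1)) φ)
    (hCs0 : Cs 0 = 1) (hSn0 : Sn 0 = 0)
    (T : ℝ)
    (hT : T = 2 / (m * n) *
      (Real.Gamma (1 / (2 * m)) * Real.Gamma (1 / (2 * n)) /
        Real.Gamma (1 / (2 * m) + 1 / (2 * n)))) :
    (∀ φ : ℝ, (Cs φ) ^ (2 * m) + (Sn φ) ^ (2 * n) = 1) ∧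
    (∀ φ : ℝ, Cs (-φ) = Cs φ) ∧
    (∀ φ : ℝ, Sn (-φ) = -Sn φ) ∧
    Function.Periodic Cs T ∧ Function.Periodic Sn T := by
  have hm0 : (0:ℝ) < m := by exact_mod_cast hm
  have hn0 : (0:ℝ) < n := by exact_mod_cast hn
  have hoddm : Odd (2*m-1) := ⟨m-1, by omega⟩
  have hoddn : Odd (2*n-1) := ⟨n-1, by omega⟩
  have hCscont : Continuous Cs := by
    rw [continuous_iff_continuousAt]; exact fun t => (hCs t).continuousAt
  have hSncont : Continuous Sn := by
    rw [continuous_iff_continuousAt]; exact fun t => (hSn t).continuousAt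
  -- conservation law
  have hE : ∀ φ, Cs φ ^ (2*m) + Sn φ ^ (2*n) = 1 := by
    have hderiv : ∀ φ, HasDerivAt (fun ψ => Cs ψ ^ (2*m) + Sn ψ ^ (2*n)) 0 φ := by
      intro φ
      have h12 := ((hCs φ).pow (2*m)).add ((hSn φ).pow (2*n))
      refine h12.congr_deriv ?_
      push_cast
      ring
    have hconst := is_const_of_deriv_eq_zero (f := fun ψ => Cs ψ ^ (2*m) + Sn ψ ^ (2*n))
      (fun x => ((hderiv x).differentiableAt)) (fun x => (hderiv x).deriv)
    intro φ
    have h := hconst φ 0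
    simp only [hCs0, hSn0] at h
    rw [h, one_pow, zero_pow (by omega : 2*n ≠ 0)]
    norm_num
  -- bounds
  have habsC : ∀ φ, |Cs φ| ≤ 1 := by
    intro φ
    have h := hE φ
    have h2 : (0:ℝ) ≤ Sn φ ^ (2*n) := (even_two_mul n).pow_nonneg _
    have h1 : |Cs φ| ^ (2*m) ≤ 1 := by
      rw [← abs_pow]
      rw [abs_of_nonneg ((even_two_mul m).pow_nonneg _)]
      linarith
    exact (pow_le_one_iff_of_nonneg (abs_nonneg _) (by omega)).1 h1
  have habsS : ∀ φ, |Sn φ| ≤ 1 := by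
    intro φ
    have h := hE φ
    have h2 : (0:ℝ) ≤ Cs φ ^ (2*m) := (even_two_mul m).pow_nonneg _
    have h1 : |Sn φ| ^ (2*n) ≤ 1 := by
      rw [← abs_pow]
      rw [abs_of_nonneg ((even_two_mul n).pow_nonneg _)]
      linarith
    exact (pow_le_one_iff_of_nonneg (abs_nonneg _) (by omega)).1 h1
  -- vector field and uniqueness setup
  set v : ℝ × ℝ → ℝ × ℝ :=
    fun p => (-(n:ℝ) * p.2 ^ (2*n-1), (m:ℝ) * p.1 ^ (2*m-1)) with hvdef
  have hVlip := vfield_lip m n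
  have hfd : ∀ t, HasDerivAt (fun t => (Cs t, Sn t)) (v ((Cs t, Sn t))) t :=
    fun t => (hCs t).prodMk (hSn t)
  have hfm : ∀ t, ((Cs t, Sn t) : ℝ × ℝ) ∈ closedBall (0 : ℝ × ℝ) 1 := by
    intro t
    rw [mem_closedBall_zero_iff, Prod.norm_def]
    exact max_le (by simpa [Real.norm_eq_abs] using habsC t)
      (by simpa [Real.norm_eq_abs] using habsS t)
  -- evenness / oddness
  have hsymm1 : ∀ t, Cs (-t) = Cs t ∧ -Sn (-t) = Sn t := by
    have hgd : ∀ t, HasDerivAt (fun t => ((Cs (-t), -Sn (-t)) : ℝ × ℝ))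
        (v ((Cs (-t), -Sn (-t)))) t := by
      intro t
      have h1 : HasDerivAt (fun t => Cs (-t)) (-(n:ℝ) * (-Sn (-t)) ^ (2*n-1)) t := by
        have h := (hCs (-t)).comp t (hasDerivAt_neg t)
        refine h.congr_deriv ?_
        rw [hoddn.neg_pow]; ring
      have h2 : HasDerivAt (fun t => -Sn (-t)) ((m:ℝ) * (Cs (-t)) ^ (2*m-1)) t := by
        have h := ((hSn (-t)).comp t (hasDerivAt_neg t)).neg
        refine h.congr_deriv ?_; ring
      exact h1.prodMk h2
    have hgm : ∀ t, ((Cs (-t), -Sn (-t)) : ℝ × ℝ) ∈ closedBall (0 : ℝ × ℝ) 1 := by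
      intro t
      rw [mem_closedBall_zero_iff, Prod.norm_def]
      refine max_le (by simpa [Real.norm_eq_abs] using habsC (-t)) ?_
      simp only [Real.norm_eq_abs, abs_neg]
      exact habsS (-t)
    have heq0 : ((Cs (-(0:ℝ)), -Sn (-(0:ℝ))) : ℝ × ℝ) = ((Cs 0, Sn 0) : ℝ × ℝ) := by
      norm_num [hSn0]
    have h := ode_unique_global hVlip hgd hgm hfd hfm heq0
    intro t
    have ht := h t
    exact ⟨congrArg Prod.fst ht, congrArg Prod.snd ht⟩
  have heven : ∀ t, Cs (-t) = Cs t := fun t => (hsymm1 t).1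
  have hodd : ∀ t, Sn (-t) = -Sn t := fun t => by
    have := (hsymm1 t).2; linarith
  -- the beta-type primitive
  set a : ℝ := 1/(2*(n:ℝ)) with hadef
  set b : ℝ := 1/(2*(m:ℝ)) with hbdef
  have ha : 0 < a := by positivity
  have hb : 0 < b := by positivity
  set β : ℝ → ℝ := fun t => t ^ (a-1) * (1-t) ^ (b-1) with hβdef
  have hβint : IntervalIntegrable β volume 0 1 := real_beta_integrable ha hb
  have hβnn : ∀ t ∈ Icc (0:ℝ) 1, 0 ≤ β t := fun t ht =>
    mul_nonneg (Real.rpow_nonneg ht.1 _) (Real.rpow_nonneg (by linarith [ht.2]) _)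
  set G : ℝ → ℝ := fun u => ∫ s in (0:ℝ)..u, β s with hGdef
  have hG0 : G 0 = 0 := intervalIntegral.integral_same
  have hβintu : ∀ u ∈ Icc (0:ℝ) 1, IntervalIntegrable β volume 0 u := by
    intro u hu
    refine hβint.mono_set ?_
    rw [uIcc_of_le hu.1, uIcc_of_le (by norm_num : (0:ℝ) ≤ 1)]
    exact Icc_subset_Icc le_rfl hu.2
  have hGmono : ∀ u ∈ Icc (0:ℝ) 1, G u ≤ G 1 := by
    intro u hu
    have hi2 : IntervalIntegrable β volume u 1 := by
      refine hβint.mono_set ?_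
      rw [uIcc_of_le hu.2, uIcc_of_le (by norm_num : (0:ℝ) ≤ 1)]
      exact Icc_subset_Icc hu.1 le_rfl
    have hadd := intervalIntegral.integral_add_adjacent_intervals (hβintu u hu) hi2
    have hnn : 0 ≤ ∫ s in u..1, β s :=
      intervalIntegral.integral_nonneg hu.2
        (fun x hx => hβnn x ⟨le_trans hu.1 hx.1, hx.2⟩)
    simp only [hGdef]
    rw [← hadd]
    linarith
  have hG1nn : 0 ≤ G 1 :=
    intervalIntegral.integral_nonneg zero_le_one hβnn
  have hGcont : ContinuousOn G (Icc 0 1) := by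
    have h := intervalIntegral.continuousOn_primitive_interval (f := β) (μ := volume) (a := 0) (b := 1) ?_
    · rwa [uIcc_of_le (by norm_num : (0:ℝ) ≤ 1)] at h
    · rw [uIcc_of_le (by norm_num : (0:ℝ) ≤ 1), integrableOn_Icc_iff_integrableOn_Ioc]
      exact hβint.1
  have hrange : ∀ t, Sn t ^ (2*n) ∈ Icc (0:ℝ) 1 := by
    intro t
    have h := hE t
    have h2 : (0:ℝ) ≤ Cs t ^ (2*m) := (even_two_mul m).pow_nonneg _
    exact ⟨(even_two_mul n).pow_nonneg _, by linarith⟩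
  -- derivative of H = G ∘ Sn^{2n}
  have hHd : ∀ t, 0 < Cs t → 0 < Sn t →
      HasDerivAt (fun t => G (Sn t ^ (2*n))) (2*(m:ℝ)*(n:ℝ)) t := by
    intro t hct hst
    have hE' := hE t
    have hsn1 : Sn t ^ (2*n) < 1 := by nlinarith [pow_pos hct (2*m)]
    have hsn0 : 0 < Sn t ^ (2*n) := pow_pos hst _
    have hβcont : ∀ u ∈ Ioo (0:ℝ) 1, ContinuousAt β u := by
      intro u hu
      refine ContinuousAt.mul ?_ ?_
      · exact Real.continuousAt_rpow_const _ _ (Or.inl hu.1.ne')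
      · have houter : ContinuousAt (fun x : ℝ => x ^ (b-1)) (1-u) :=
          Real.continuousAt_rpow_const _ _ (Or.inl (by linarith [hu.2]))
        exact houter.comp ((continuous_const.sub continuous_id).continuousAt)
    have hG' : HasDerivAt G (β (Sn t ^ (2*n))) (Sn t ^ (2*n)) := by
      refine intervalIntegral.integral_hasDerivAt_right
        (hβintu _ ⟨hsn0.le, hsn1.le⟩) ?_ (hβcont _ ⟨hsn0, hsn1⟩)
      exact (ContinuousOn.stronglyMeasurableAtFilter isOpen_Ioo
        (fun u hu => (hβcont u hu).continuousWithinAt) _ ⟨hsn0, hsn1⟩)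
    have hpow : HasDerivAt (fun t => Sn t ^ (2*n))
        (((2*n : ℕ) : ℝ) * Sn t ^ (2*n-1) * ((m:ℝ) * Cs t ^ (2*m-1))) t := (hSn t).pow _
    have hcomp := hG'.comp t hpow
    refine hcomp.congr_deriv ?_
    -- value identity
    set s := Sn t
    set c := Cs t
    have h1m : 1 - s ^ (2*n) = c ^ (2*m) := by linarith
    have hsub_n : ((2*n-1 : ℕ) : ℝ) = 2*(n:ℝ) - 1 := by
      rw [Nat.cast_sub (by omega)]; push_cast; ring
    have hsub_m : ((2*m-1 : ℕ) : ℝ) = 2*(m:ℝ) - 1 := by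
      rw [Nat.cast_sub (by omega)]; push_cast; ring
    have ea : ((2*n : ℕ) : ℝ) * (a-1) + ((2*n-1 : ℕ) : ℝ) = 0 := by
      rw [hsub_n, hadef]; push_cast; field_simp; ring
    have eb : ((2*m : ℕ) : ℝ) * (b-1) + ((2*m-1 : ℕ) : ℝ) = 0 := by
      rw [hsub_m, hbdef]; push_cast; field_simp; ring
    have es : s ^ (((2*n : ℕ) : ℝ) * (a-1)) * s ^ (((2*n-1 : ℕ) : ℝ)) = 1 := by
      rw [← Real.rpow_add hst, ea, Real.rpow_zero]
    have ec : c ^ (((2*m : ℕ) : ℝ) * (b-1)) * c ^ (((2*m-1 : ℕ) : ℝ)) = 1 := by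
      rw [← Real.rpow_add hct, eb, Real.rpow_zero]
    have hβval : β (s ^ (2*n))
        = s ^ (((2*n : ℕ) : ℝ) * (a-1)) * c ^ (((2*m : ℕ) : ℝ) * (b-1)) := by
      simp only [hβdef]
      rw [h1m, ← Real.rpow_natCast s (2*n), ← Real.rpow_natCast c (2*m),
        ← Real.rpow_mul hst.le, ← Real.rpow_mul hct.le]
    have hps : s ^ (2*n-1) = s ^ (((2*n-1 : ℕ) : ℝ)) := (Real.rpow_natCast s (2*n-1)).symm
    have hpc : c ^ (2*m-1) = c ^ (((2*m-1 : ℕ) : ℝ)) := (Real.rpow_natCast c (2*m-1)).symm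
    rw [hβval, hps, hpc]
    rw [show s ^ (((2*n : ℕ) : ℝ) * (a-1)) * c ^ (((2*m : ℕ) : ℝ) * (b-1)) *
        (((2*n : ℕ) : ℝ) * s ^ (((2*n-1 : ℕ) : ℝ)) * ((m:ℝ) * c ^ (((2*m-1 : ℕ) : ℝ))))
      = (s ^ (((2*n : ℕ) : ℝ) * (a-1)) * s ^ (((2*n-1 : ℕ) : ℝ))) *
        ((c ^ (((2*m : ℕ) : ℝ) * (b-1)) * c ^ (((2*m-1 : ℕ) : ℝ))) *
         (((2*n : ℕ) : ℝ) * (m:ℝ))) from by ring]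
    rw [es, ec]
    push_cast
    ring
  -- FTC key identity
  have hHcont : ∀ Y : ℝ, ContinuousOn (fun t => G (Sn t ^ (2*n))) (Icc 0 Y) := by
    intro Y
    refine hGcont.comp ((hSncont.pow (2*n)).continuousOn) ?_
    intro t _
    exact hrange t
  have hSnpos : ∀ Y, 0 < Y → (∀ t ∈ Ioo (0:ℝ) Y, 0 < Cs t) →
      ∀ t ∈ Ioc (0:ℝ) Y, 0 < Sn t := by
    intro Y hY hCpos t ht
    have hmono : StrictMonoOn Sn (Icc 0 Y) := by
      refine strictMonoOn_of_deriv_pos (convex_Icc 0 Y) hSncont.continuousOn ?_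
      intro x hx
      rw [interior_Icc] at hx
      rw [(hSn x).deriv]
      have := hCpos x hx
      positivity
    have := hmono ⟨le_rfl, hY.le⟩ ⟨ht.1.le, ht.2⟩ ht.1
    rwa [hSn0] at this
  have hkey : ∀ Y, 0 < Y → (∀ t ∈ Ioo (0:ℝ) Y, 0 < Cs t) →
      2*(m:ℝ)*(n:ℝ) * Y = G (Sn Y ^ (2*n)) := by
    intro Y hY hCpos
    have hderiv : ∀ x ∈ Ioo (0:ℝ) Y,
        HasDerivWithinAt (fun t => G (Sn t ^ (2*n))) (2*(m:ℝ)*(n:ℝ)) (Ioi x) x := by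
      intro x hx
      exact (hHd x (hCpos x hx) (hSnpos Y hY hCpos x ⟨hx.1, hx.2.le⟩)).hasDerivWithinAt
    have hout := intervalIntegral.integral_eq_sub_of_hasDeriv_right_of_le hY.le
      (hHcont Y) hderiv (intervalIntegrable_const)
    rw [intervalIntegral.integral_const, smul_eq_mul] at hout
    simp only [hSn0, sub_zero] at hout
    rw [zero_pow (by omega : 2*n ≠ 0), hG0, sub_zero] at hout
    rw [← hout]
    ring
  -- existence of a zero of Cs
  have hmn : (0:ℝ) < 2*(m:ℝ)*(n:ℝ) := by positivity
  set Y₀ : ℝ := G 1 / (2*(m:ℝ)*(n:ℝ)) + 1 with hY₀def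
  have hY₀pos : 0 < Y₀ := by
    have : 0 ≤ G 1 / (2*(m:ℝ)*(n:ℝ)) := div_nonneg hG1nn hmn.le
    simp only [hY₀def]; linarith
  have hzero : ∃ z, z ∈ Icc (0:ℝ) Y₀ ∧ Cs z = 0 := by
    by_contra hcon
    push_neg at hcon
    have hpos : ∀ t ∈ Ioo (0:ℝ) Y₀, 0 < Cs t := by
      intro t ht
      rcases lt_trichotomy (Cs t) 0 with h|h|h
      · exfalso
        obtain ⟨z, hz, hz0⟩ := intermediate_value_Icc' ht.1.le hCscont.continuousOn
          (show (0:ℝ) ∈ Icc (Cs t) (Cs 0) from ⟨h.le, by rw [hCs0]; norm_num⟩)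
        exact hcon z ⟨hz.1, hz.2.trans ht.2.le⟩ hz0
      · exact absurd h (hcon t ⟨ht.1.le, ht.2.le⟩)
      · exact h
    have hk := hkey Y₀ hY₀pos hpos
    have hle : G (Sn Y₀ ^ (2*n)) ≤ G 1 := hGmono _ (hrange Y₀)
    have : 2*(m:ℝ)*(n:ℝ) * Y₀ = 2*(m:ℝ)*(n:ℝ) * (G 1 / (2*(m:ℝ)*(n:ℝ))) + 2*(m:ℝ)*(n:ℝ) := by
      simp only [hY₀def]; ring
    rw [mul_div_cancel₀ _ hmn.ne'] at this
    linarith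
  -- first zero t₀
  set S : Set ℝ := Icc (0:ℝ) Y₀ ∩ Cs ⁻¹' {0} with hSdef
  have hSclosed : IsClosed S := isClosed_Icc.inter (isClosed_singleton.preimage hCscont)
  have hSne : S.Nonempty := by
    obtain ⟨z, hz, hz0⟩ := hzero
    exact ⟨z, hz, by simpa using hz0⟩
  have hSbdd : BddBelow S := ⟨0, fun x hx => hx.1.1⟩
  set t₀ : ℝ := sInf S with ht₀def
  have ht₀mem : t₀ ∈ S := hSclosed.csInf_mem hSne hSbdd
  have ht₀zero : Cs t₀ = 0 := by simpa using ht₀mem.2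
  have ht₀pos : 0 < t₀ := by
    rcases lt_or_eq_of_le ht₀mem.1.1 with h|h
    · exact h
    · exfalso; rw [← h, hCs0] at ht₀zero; norm_num at ht₀zero
  have hCspos : ∀ t ∈ Ico (0:ℝ) t₀, 0 < Cs t := by
    intro t ht
    rcases lt_trichotomy (Cs t) 0 with h|h|h
    · exfalso
      obtain ⟨z, hz, hz0⟩ := intermediate_value_Icc' ht.1 hCscont.continuousOn
        (show (0:ℝ) ∈ Icc (Cs t) (Cs 0) from ⟨h.le, by rw [hCs0]; norm_num⟩)
      have hzS : z ∈ S := ⟨⟨hz.1, hz.2.trans (ht.2.le.trans ht₀mem.1.2)⟩, by simpa using hz0⟩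
      have := csInf_le hSbdd hzS
      rw [← ht₀def] at this
      linarith [hz.2, ht.2]
    · exfalso
      have hzS : t ∈ S := ⟨⟨ht.1, ht.2.le.trans ht₀mem.1.2⟩, by simpa using h⟩
      have := csInf_le hSbdd hzS
      rw [← ht₀def] at this
      linarith [ht.2]
    · exact h
  have hCspos' : ∀ t ∈ Ioo (0:ℝ) t₀, 0 < Cs t := fun t ht => hCspos t ⟨ht.1.le, ht.2⟩
  have hkt₀ := hkey t₀ ht₀pos hCspos'
  -- Sn t₀ = 1
  have hSnt₀pow : Sn t₀ ^ (2*n) = 1 := by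
    have h := hE t₀
    rw [ht₀zero, zero_pow (by omega : 2*m ≠ 0)] at h
    linarith
  have hSnt₀pos : 0 < Sn t₀ := by
    have := hSnpos t₀ ht₀pos hCspos' t₀ ⟨ht₀pos, le_rfl⟩
    exact this
  have hSnt₀ : Sn t₀ = 1 := by
    by_contra hne
    have hlt : Sn t₀ < 1 := lt_of_le_of_ne ((abs_le.mp (habsS t₀)).2) hne
    have := pow_lt_one₀ hSnt₀pos.le hlt (by omega : 2*n ≠ 0)
    rw [hSnt₀pow] at this
    norm_num at this
  rw [hSnt₀, one_pow] at hkt₀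
  -- T = 4 t₀
  have hbeta := real_beta_value ha hb
  have hG1 : G 1 = Real.Gamma a * Real.Gamma b / Real.Gamma (a+b) := hbeta
  have hT4 : T = 4 * t₀ := by
    have hGab : Real.Gamma (a+b) ≠ 0 := (Real.Gamma_pos_of_pos (by linarith)).ne'
    have hTa : T = 2 / ((m:ℝ)*(n:ℝ)) * (Real.Gamma b * Real.Gamma a / Real.Gamma (b+a)) := by
      rw [hT]
    rw [hTa, add_comm b a]
    have ht₀eq : t₀ = G 1 / (2*(m:ℝ)*(n:ℝ)) := by
      field_simp at hkt₀ ⊢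
      linarith
    rw [ht₀eq, hG1]
    field_simp
    ring
  -- half-period symmetry
  have hsymm2 : ∀ t, Cs t = -Cs (2*t₀ - t) ∧ Sn t = Sn (2*t₀ - t) := by
    have hgd : ∀ t, HasDerivAt (fun t => ((-Cs (2*t₀ - t), Sn (2*t₀ - t)) : ℝ × ℝ))
        (v ((-Cs (2*t₀ - t), Sn (2*t₀ - t)))) t := by
      intro t
      have hinner : HasDerivAt (fun t : ℝ => 2*t₀ - t) (-1) t := by
        simpa using (hasDerivAt_id t).const_sub (2*t₀)
      have h1 : HasDerivAt (fun t => -Cs (2*t₀ - t))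
          (-(n:ℝ) * (Sn (2*t₀ - t)) ^ (2*n-1)) t := by
        have h := ((hCs (2*t₀ - t)).comp t hinner).neg
        refine h.congr_deriv ?_
        ring
      have h2 : HasDerivAt (fun t => Sn (2*t₀ - t))
          ((m:ℝ) * (-Cs (2*t₀ - t)) ^ (2*m-1)) t := by
        have h := (hSn (2*t₀ - t)).comp t hinner
        refine h.congr_deriv ?_
        rw [hoddm.neg_pow]; ring
      exact h1.prodMk h2
    have hgm : ∀ t, ((-Cs (2*t₀ - t), Sn (2*t₀ - t)) : ℝ × ℝ) ∈ closedBall (0 : ℝ × ℝ) 1 := by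
      intro t
      rw [mem_closedBall_zero_iff, Prod.norm_def]
      refine max_le ?_ (by simpa [Real.norm_eq_abs] using habsS (2*t₀ - t))
      simp only [Real.norm_eq_abs, abs_neg]
      exact habsC (2*t₀ - t)
    have heqt₀ : ((Cs t₀, Sn t₀) : ℝ × ℝ) = ((-Cs (2*t₀ - t₀), Sn (2*t₀ - t₀)) : ℝ × ℝ) := by
      have h2t : 2*t₀ - t₀ = t₀ := by ring
      rw [h2t, ht₀zero]
      norm_num
    have h := ode_unique_global hVlip hfd hfm hgd hgm heqt₀
    intro t
    have ht := h t
    exact ⟨congrArg Prod.fst ht, congrArg Prod.snd ht⟩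
  have hCsflip : ∀ t, Cs (2*t₀ + t) = -Cs t := by
    intro t
    have h := (hsymm2 (-t)).1
    rw [show 2*t₀ - -t = 2*t₀ + t by ring] at h
    rw [heven t] at h
    linarith
  have hSnflip : ∀ t, Sn (2*t₀ + t) = -Sn t := by
    intro t
    have h := (hsymm2 (-t)).2
    rw [show 2*t₀ - -t = 2*t₀ + t by ring] at h
    rw [hodd t] at h
    linarith
  have hCsper : ∀ t, Cs (t + T) = Cs t := by
    intro t
    rw [hT4, show t + 4*t₀ = 2*t₀ + (2*t₀ + t) by ring, hCsflip, hCsflip]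
    ring
  have hSnper : ∀ t, Sn (t + T) = Sn t := by
    intro t
    rw [hT4, show t + 4*t₀ = 2*t₀ + (2*t₀ + t) by ring, hSnflip, hSnflip]
    ring
  exact ⟨hE, heven, hodd, hCsper, hSnper⟩
end
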